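/- arXiv:2302.06423 — 7 statements merged into one kernel-verified Lean document; each statement's English description precedes it below -/
import Mathlib

section
/- Let g and h be probability density functions on ℝ (with respect to Lebesgue measure) with h(t) > 0 for every t ∈ ℝ, and let t₁ ≤ t₂ be real numbers such that g(t) ≤ h(t) for all t ∉ [t₁,t₂], g(t) ≥ h(t) for all t ∈ [t₁,t₂], and ∫_{[t₁,t₂]} (g(t) − h(t)) dt > 0. On a probability space let T, U, S be independent random variables, where T has density h, U is uniformly distributed on [0,1], and S has density t ↦ (g(t) − h(t))·1_{[t₁,t₂]}(t) / ∫_{[t₁,t₂]}(g − h). Define Z = T if U ≤ g(T)/h(T) and Z = S otherwise. Then Z has density g, i.e. the modified rejection sampling algorithm draws a sample from the target density g with probability 1. -/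
/-!
Given `T = t`, the proposal is accepted with probability `min (g t / h t) 1`, so the accepted
part of the law of `Z` has density `h · min (g / h, 1) = min (g, h)`. The rejection probability is
`1 - ∫ min (g, h) = ∫_{[t₁,t₂]} (g - h)`, and since `S` is independent of the acceptance event the
rejected part has density `(g - h) · 1_{[t₁,t₂]}`. These two densities add up to `g`.
-/

open MeasureTheory ProbabilityTheory Set

lemma min_add_ite_sub_eq {s : Set ℝ} [DecidablePred (· ∈ s)] {g h : ℝ → ℝ}
    (h_out : ∀ t, t ∉ s → g t ≤ h t) (h_in : ∀ t ∈ s, h t ≤ g t) (t : ℝ) :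
    min (g t) (h t) + (if t ∈ s then g t - h t else 0) = g t := by
  by_cases hts : t ∈ s
  · simp [hts, min_eq_right (h_in t hts)]
  · simp [hts, min_eq_left (h_out t hts)]

lemma integral_min_eq_integral_sub_setIntegral {s : Set ℝ} (hs : MeasurableSet s) {g h : ℝ → ℝ}
    (hg : Integrable g) (hh : Integrable h)
    (h_out : ∀ t, t ∉ s → g t ≤ h t) (h_in : ∀ t ∈ s, h t ≤ g t) :
    ∫ t, min (g t) (h t) = (∫ t, g t) - ∫ t in s, (g t - h t) := by
  classical
  have hsub : s.indicator (fun t => g t - h t) = fun t => g t - min (g t) (h t) := by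
    ext t
    rw [indicator_apply, eq_sub_iff_add_eq', min_add_ite_sub_eq h_out h_in]
  have hdiff : ∫ t, s.indicator (fun t => g t - h t) t =
      (∫ t, g t) - ∫ t, min (g t) (h t) := by
    rw [hsub]; exact integral_sub hg (hg.inf hh)
  rw [← integral_indicator hs, hdiff, sub_sub_cancel]

lemma volume_restrict_Icc_zero_one_Iic (x : ℝ) :
    volume.restrict (Icc (0 : ℝ) 1) (Iic x) = ENNReal.ofReal (min x 1) := by
  have : Iic x ∩ Icc (0 : ℝ) 1 = Icc 0 (min x 1) := by
    ext u; simp only [mem_inter_iff, mem_Iic, mem_Icc, le_min_iff]; tauto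
  rw [Measure.restrict_apply measurableSet_Iic, this, Real.volume_Icc, sub_zero]

lemma measurableSet_setOf_snd_le {α : Type*} [MeasurableSpace α] {r : α → ℝ}
    (hr : Measurable r) : MeasurableSet {p : α × ℝ | p.2 ≤ r p.1} :=
  measurableSet_le measurable_snd (hr.comp measurable_fst)

lemma prod_volume_restrict_Icc_zero_one_le_inter {α : Type*} [MeasurableSpace α]
    (μ : Measure α) [SFinite μ] {r : α → ℝ} (hr : Measurable r) {A : Set α}
    (hA : MeasurableSet A) :
    μ.prod (volume.restrict (Icc (0 : ℝ) 1)) ({p | p.2 ≤ r p.1} ∩ Prod.fst ⁻¹' A) =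
      ∫⁻ t in A, ENNReal.ofReal (min (r t) 1) ∂μ := by
  have hfiber (t : α) : volume.restrict (Icc (0 : ℝ) 1)
      (Prod.mk t ⁻¹' ({p : α × ℝ | p.2 ≤ r p.1} ∩ Prod.fst ⁻¹' A)) =
        A.indicator (fun t => ENNReal.ofReal (min (r t) 1)) t := by
    by_cases htA : t ∈ A
    · have : Prod.mk t ⁻¹' ({p : α × ℝ | p.2 ≤ r p.1} ∩ Prod.fst ⁻¹' A) = Iic (r t) := by
        ext u; simp [htA]
      rw [this, volume_restrict_Icc_zero_one_Iic, indicator_of_mem htA]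
    · have : Prod.mk t ⁻¹' ({p : α × ℝ | p.2 ≤ r p.1} ∩ Prod.fst ⁻¹' A) = ∅ := by
        ext u; simp [htA]
      rw [this, measure_empty, indicator_of_notMem htA]
  rw [Measure.prod_apply ((measurableSet_setOf_snd_le hr).inter (measurable_fst hA))]
  simp only [hfiber]
  exact lintegral_indicator hA _

section RandomVariables

variable {Ω α : Type*} [MeasurableSpace Ω] [MeasurableSpace α] {P : Measure Ω}

lemma measure_le_comp_inter_preimage [IsFiniteMeasure P] {T : Ω → α} {U : Ω → ℝ}
    (hT : Measurable T) (hU : Measurable U) (hTU : IndepFun T U P)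
    (hU_law : P.map U = volume.restrict (Icc (0 : ℝ) 1))
    {r : α → ℝ} (hr : Measurable r) {A : Set α} (hA : MeasurableSet A) :
    P ((fun ω => (T ω, U ω)) ⁻¹' {p | p.2 ≤ r p.1} ∩ T ⁻¹' A) =
      ∫⁻ t in A, ENNReal.ofReal (min (r t) 1) ∂P.map T := by
  have hmap := (indepFun_iff_map_prod_eq_prod_map_map hT.aemeasurable hU.aemeasurable).mp hTU
  rw [← prod_volume_restrict_Icc_zero_one_le_inter _ hr hA, ← hU_law, ← hmap,
    Measure.map_apply (hT.prodMk hU)]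
  · rfl
  exact (measurableSet_setOf_snd_le hr).inter (measurable_fst hA)

lemma setLIntegral_withDensity_ofReal_min_div {g h : ℝ → ℝ} (hg : Measurable g)
    (hh : Measurable h) (hh_pos : ∀ t, 0 < h t) {A : Set ℝ} (hA : MeasurableSet A) :
    ∫⁻ t in A, ENNReal.ofReal (min (g t / h t) 1)
        ∂volume.withDensity (fun t => ENNReal.ofReal (h t)) =
      ∫⁻ t in A, ENNReal.ofReal (min (g t) (h t)) := by
  rw [setLIntegral_withDensity_eq_setLIntegral_mul _ hh.ennreal_ofReal (by fun_prop) hA]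
  refine lintegral_congr fun t => ?_
  rw [Pi.mul_apply, ← ENNReal.ofReal_mul (hh_pos t).le, mul_min_of_nonneg _ _ (hh_pos t).le,
    mul_div_cancel₀ _ (hh_pos t).ne', mul_one, min_comm]

section Acceptance

variable {g h : ℝ → ℝ} {T U : Ω → ℝ}

lemma measure_accept_inter_preimage [IsFiniteMeasure P] (hg : Measurable g) (hh : Measurable h)
    (hh_pos : ∀ t, 0 < h t) (hT : Measurable T) (hU : Measurable U) (hTU : IndepFun T U P)
    (hT_law : P.map T = volume.withDensity (fun t => ENNReal.ofReal (h t)))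
    (hU_law : P.map U = volume.restrict (Icc (0 : ℝ) 1)) {A : Set ℝ} (hA : MeasurableSet A) :
    P ((fun ω => (T ω, U ω)) ⁻¹' {p | p.2 ≤ g p.1 / h p.1} ∩ T ⁻¹' A) =
      ∫⁻ t in A, ENNReal.ofReal (min (g t) (h t)) := by
  have hr : Measurable fun t => g t / h t := hg.div hh
  rw [measure_le_comp_inter_preimage hT hU hTU hU_law hr hA, hT_law,
    setLIntegral_withDensity_ofReal_min_div hg hh hh_pos hA]

lemma measure_reject [IsProbabilityMeasure P] (hg : Measurable g) (hh : Measurable h)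
    (hg_nonneg : ∀ t, 0 ≤ g t) (hh_pos : ∀ t, 0 < h t)
    (hmin : Integrable fun t => min (g t) (h t))
    (hT : Measurable T) (hU : Measurable U) (hTU : IndepFun T U P)
    (hT_law : P.map T = volume.withDensity (fun t => ENNReal.ofReal (h t)))
    (hU_law : P.map U = volume.restrict (Icc (0 : ℝ) 1)) :
    P ((fun ω => (T ω, U ω)) ⁻¹' {p | p.2 ≤ g p.1 / h p.1})ᶜ =
      ENNReal.ofReal (1 - ∫ t, min (g t) (h t)) := by
  have hmin_nonneg (t : ℝ) : 0 ≤ min (g t) (h t) := le_min (hg_nonneg t) (hh_pos t).le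
  have haccept := measure_accept_inter_preimage hg hh hh_pos hT hU hTU hT_law hU_law .univ
  rw [preimage_univ, inter_univ, Measure.restrict_univ,
    ← ofReal_integral_eq_lintegral_ofReal hmin (.of_forall hmin_nonneg)] at haccept
  have hr : Measurable fun t => g t / h t := hg.div hh
  rw [prob_compl_eq_one_sub ((hT.prodMk hU) (measurableSet_setOf_snd_le hr)), haccept,
    ← ENNReal.ofReal_one, ENNReal.ofReal_sub _ (integral_nonneg hmin_nonneg)]

end Acceptance

lemma map_ite_apply_of_indepFun {β : Type*} [MeasurableSpace β] {X : Ω → β} {T S : Ω → α}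
    (hX : Measurable X) (hT : Measurable T) (hS : Measurable S) (hXS : IndepFun X S P)
    {B : Set β} [DecidablePred (· ∈ B)] (hB : MeasurableSet B) {A : Set α}
    (hA : MeasurableSet A) :
    P.map (fun ω => if X ω ∈ B then T ω else S ω) A =
      P (X ⁻¹' B ∩ T ⁻¹' A) + P (X ⁻¹' B)ᶜ * P.map S A := by
  have hsplit : (fun ω => if X ω ∈ B then T ω else S ω) ⁻¹' A =
      (X ⁻¹' B ∩ T ⁻¹' A) ∪ (X ⁻¹' Bᶜ ∩ S ⁻¹' A) := by
    ext ω; by_cases hω : X ω ∈ B <;> simp [hω]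
  rw [Measure.map_apply (Measurable.ite (hX hB) hT hS) hA, hsplit,
    measure_union _ ((hX hB.compl).inter (hS hA)),
    hXS.measure_inter_preimage_eq_mul _ _ hB.compl hA, Measure.map_apply hS hA, preimage_compl]
  exact disjoint_compl_right.mono inter_subset_left inter_subset_left

end RandomVariables

theorem modified_rejection_sampling_target_density_general
    {Ω : Type*} [MeasurableSpace Ω] (P : Measure Ω) [IsProbabilityMeasure P]
    (g h : ℝ → ℝ) (hg_meas : Measurable g) (hh_meas : Measurable h)
    (hg_nonneg : ∀ t, 0 ≤ g t) (hh_pos : ∀ t, 0 < h t)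
    (hg_int : ∫ t, g t = 1) (hh_int : ∫ t, h t = 1)
    (t₁ t₂ : ℝ)
    (h_out : ∀ t, t ∉ Set.Icc t₁ t₂ → g t ≤ h t)
    (h_in : ∀ t ∈ Set.Icc t₁ t₂, h t ≤ g t)
    (h_mass : 0 < ∫ t in Set.Icc t₁ t₂, (g t - h t))
    (T U S : Ω → ℝ) (hT : Measurable T) (hU : Measurable U) (hS : Measurable S)
    (h_indep : iIndepFun ![T, U, S] P)
    (hT_law : Measure.map T P = volume.withDensity (fun t => ENNReal.ofReal (h t)))
    (hU_law : Measure.map U P = volume.restrict (Set.Icc (0 : ℝ) 1))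
    (hS_law : Measure.map S P = volume.withDensity (fun t =>
      ENNReal.ofReal ((if t ∈ Set.Icc t₁ t₂ then g t - h t else 0) /
        ∫ s in Set.Icc t₁ t₂, (g s - h s)))) :
    Measure.map (fun ω => if U ω ≤ g (T ω) / h (T ω) then T ω else S ω) P =
      volume.withDensity (fun t => ENNReal.ofReal (g t)) := by
  set c := ∫ s in Icc t₁ t₂, (g s - h s)
  set B : Set (ℝ × ℝ) := {p | p.2 ≤ g p.1 / h p.1}
  have hB : MeasurableSet B := measurableSet_setOf_snd_le (hg_meas.div hh_meas)
  have hTU : IndepFun T U P := h_indep.indepFun (show (0 : Fin 3) ≠ 1 by decide)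
  have hTU_S : IndepFun (fun ω => (T ω, U ω)) S P := by
    have hmeas (i : Fin 3) : Measurable (![T, U, S] i) := by fin_cases i <;> assumption
    exact h_indep.indepFun_prodMk hmeas 0 1 2 (by decide) (by decide)
  have hg := integrable_of_integral_eq_one hg_int
  have hh := integrable_of_integral_eq_one hh_int
  have hreject : P ((fun ω => (T ω, U ω)) ⁻¹' B)ᶜ = ENNReal.ofReal c := by
    rw [measure_reject hg_meas hh_meas hg_nonneg hh_pos (hg.inf hh) hT hU hTU hT_law hU_law,
      integral_min_eq_integral_sub_setIntegral measurableSet_Icc hg hh h_out h_in, hg_int,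
      sub_sub_cancel]
  have hZ : (fun ω => if U ω ≤ g (T ω) / h (T ω) then T ω else S ω) =
      fun ω => if (T ω, U ω) ∈ B then T ω else S ω := rfl
  ext A hA
  rw [hZ, map_ite_apply_of_indepFun (hT.prodMk hU) hT hS hTU_S hB hA,
    measure_accept_inter_preimage hg_meas hh_meas hh_pos hT hU hTU hT_law hU_law hA, hreject,
    hS_law, withDensity_apply _ hA, withDensity_apply _ hA,
    ← lintegral_const_mul' _ _ ENNReal.ofReal_ne_top, ← lintegral_add_left (by fun_prop)]
  refine lintegral_congr fun t => ?_
  have hrest : 0 ≤ if t ∈ Icc t₁ t₂ then g t - h t else 0 := by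
    split_ifs with ht
    exacts [sub_nonneg.2 (h_in t ht), le_rfl]
  rw [← ENNReal.ofReal_mul h_mass.le, mul_div_cancel₀ _ h_mass.ne',
    ← ENNReal.ofReal_add (le_min (hg_nonneg t) (hh_pos t).le) hrest,
    min_add_ite_sub_eq h_out h_in]

/-- Proposition 1: the modified rejection sampling algorithm draws a sample from the
target density `g` with probability 1. -/
theorem modified_rejection_sampling_target_density
    {Ω : Type*} [MeasurableSpace Ω] (P : Measure Ω) [IsProbabilityMeasure P]
    (g h : ℝ → ℝ) (hg_meas : Measurable g) (hh_meas : Measurable h)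
    (hg_nonneg : ∀ t, 0 ≤ g t) (hh_pos : ∀ t, 0 < h t)
    (hg_int : ∫ t, g t = 1) (hh_int : ∫ t, h t = 1)
    (t₁ t₂ : ℝ) (ht : t₁ ≤ t₂)
    (h_out : ∀ t, t ∉ Set.Icc t₁ t₂ → g t ≤ h t)
    (h_in : ∀ t ∈ Set.Icc t₁ t₂, h t ≤ g t)
    (h_mass : 0 < ∫ t in Set.Icc t₁ t₂, (g t - h t))
    (T U S : Ω → ℝ) (hT : Measurable T) (hU : Measurable U) (hS : Measurable S)
    (h_indep : iIndepFun ![T, U, S] P)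
    (hT_law : Measure.map T P = volume.withDensity (fun t => ENNReal.ofReal (h t)))
    (hU_law : Measure.map U P = volume.restrict (Set.Icc (0 : ℝ) 1))
    (hS_law : Measure.map S P = volume.withDensity (fun t =>
      ENNReal.ofReal ((if t ∈ Set.Icc t₁ t₂ then g t - h t else 0) /
        ∫ s in Set.Icc t₁ t₂, (g s - h s)))) :
    Measure.map (fun ω => if U ω ≤ g (T ω) / h (T ω) then T ω else S ω) P =
      volume.withDensity (fun t => ENNReal.ofReal (g t)) :=
  modified_rejection_sampling_target_density_general P g h hg_meas hh_meas hg_nonneg hh_pos hg_int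
    hh_int t₁ t₂ h_out h_in h_mass T U S hT hU hS h_indep hT_law hU_law hS_law
end

section
/- Fix a positive integer γ. Let (αₙ) and (βₙ) be real sequences with αₙ > 0, βₙ < 0, and βₙ/αₙ → −∞. For each n let Nₙ = ∫₀^∞ x^γ e^{−αₙ²x² + βₙx} dx, let qₙ(x) = x^γ e^{−αₙ²x² + βₙx}/Nₙ be the three-parameter Gamma density G3p(γ, αₙ, βₙ) on (0,∞), and let pₙ(x) = ((−βₙ)^{γ+1}/γ!) x^γ e^{βₙx} be the Gamma density with shape d = γ+1 and rate c = −βₙ on (0,∞). Then the Kullback–Leibler divergence KL(pₙ ∥ qₙ) = ∫₀^∞ pₙ(x) log(pₙ(x)/qₙ(x)) dx converges to 0 as n → ∞. -/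
open MeasureTheory Filter

/-- The unnormalized three-parameter Gamma kernel `x^γ e^{−a²x² + bx}`. -/
noncomputable def g3pKernel (γ : ℕ) (a b : ℝ) (x : ℝ) : ℝ :=
  x ^ γ * Real.exp (-a ^ 2 * x ^ 2 + b * x)

/-- The normalizing constant `N(γ,a,b) = ∫₀^∞ x^γ e^{−a²x² + bx} dx`. -/
noncomputable def g3pNorm (γ : ℕ) (a b : ℝ) : ℝ :=
  ∫ x in Set.Ioi (0 : ℝ), g3pKernel γ a b x

/-- The three-parameter Gamma density `G3p(γ,a,b)` on `(0,∞)`. -/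
noncomputable def g3pDensity (γ : ℕ) (a b : ℝ) (x : ℝ) : ℝ :=
  g3pKernel γ a b x / g3pNorm γ a b

/-- The Gamma density with shape `d = γ+1` and rate `c = −b` on `(0,∞)`. -/
noncomputable def gammaShapeRateDensity (γ : ℕ) (b : ℝ) (x : ℝ) : ℝ :=
  (-b) ^ (γ + 1) / (Nat.factorial γ) * x ^ γ * Real.exp (b * x)

/-! On `(0,∞)` the two densities differ by the factor `R · e^{a²x²}`, where
`R = N(γ,a,b)/N(γ,0,b)` is a ratio of normalizing constants, so the divergence is
`log R + a² E[x²] = log R + (γ+1)(γ+2)(a/b)²` (second moment of the Gamma law).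
From `1 - a²x² ≤ e^{-a²x²} ≤ 1` we get `1 - (γ+1)(γ+2)(a/b)² ≤ R ≤ 1`, so both terms
vanish as `(a/b)² → 0`. -/

open Real Set
open scoped Nat

lemma integrableOn_pow_mul_exp_mul_Ioi (n : ℕ) {b : ℝ} (hb : b < 0) :
    IntegrableOn (fun x : ℝ => x ^ n * exp (b * x)) (Ioi 0) := by
  refine (integrableOn_rpow_mul_exp_neg_mul_rpow (s := n) (p := 1)
    (by linarith [n.cast_nonneg (α := ℝ)]) one_pos (neg_pos.2 hb)).congr_fun
    (fun x _ => ?_) measurableSet_Ioi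
  simp [Real.rpow_natCast]

lemma integral_pow_mul_exp_mul_Ioi (n : ℕ) {b : ℝ} (hb : b < 0) :
    ∫ x in Ioi (0 : ℝ), x ^ n * exp (b * x) = n ! / (-b) ^ (n + 1) := by
  have h := integral_rpow_mul_exp_neg_mul_Ioi (a := n + 1) (by positivity) (neg_pos.2 hb)
  rw [add_sub_cancel_right, Gamma_nat_eq_factorial, ← Nat.cast_succ] at h
  simp only [Real.rpow_natCast, neg_mul, neg_neg] at h
  rw [h, div_pow, one_pow, one_div_mul_eq_div]

lemma g3pKernel_pos (γ : ℕ) (a b : ℝ) {x : ℝ} (hx : 0 < x) : 0 < g3pKernel γ a b x := by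
  unfold g3pKernel; positivity

lemma g3pKernel_eq (γ : ℕ) (a b x : ℝ) :
    g3pKernel γ a b x = x ^ γ * exp (b * x) * exp (-(a ^ 2 * x ^ 2)) := by
  rw [g3pKernel, mul_assoc, ← exp_add]; ring_nf

lemma g3pKernel_le (γ : ℕ) (a b : ℝ) {x : ℝ} (hx : 0 ≤ x) :
    g3pKernel γ a b x ≤ x ^ γ * exp (b * x) := by
  rw [g3pKernel_eq]
  exact mul_le_of_le_one_right (by positivity) (exp_le_one_iff.2 (by nlinarith))

lemma sub_le_g3pKernel (γ : ℕ) (a b : ℝ) {x : ℝ} (hx : 0 ≤ x) :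
    x ^ γ * exp (b * x) - a ^ 2 * (x ^ (γ + 2) * exp (b * x)) ≤ g3pKernel γ a b x := by
  have h : 1 - a ^ 2 * x ^ 2 ≤ exp (-(a ^ 2 * x ^ 2)) := by
    linarith [add_one_le_exp (-(a ^ 2 * x ^ 2))]
  calc x ^ γ * exp (b * x) - a ^ 2 * (x ^ (γ + 2) * exp (b * x))
      = x ^ γ * exp (b * x) * (1 - a ^ 2 * x ^ 2) := by ring
    _ ≤ x ^ γ * exp (b * x) * exp (-(a ^ 2 * x ^ 2)) := by gcongr
    _ = g3pKernel γ a b x := (g3pKernel_eq γ a b x).symm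

lemma integrableOn_g3pKernel (γ : ℕ) (a : ℝ) {b : ℝ} (hb : b < 0) :
    IntegrableOn (g3pKernel γ a b) (Ioi 0) := by
  refine (integrableOn_pow_mul_exp_mul_Ioi γ hb).mono'
    (by unfold g3pKernel; fun_prop) ((ae_restrict_iff' measurableSet_Ioi).2 (ae_of_all _ ?_))
  intro x (hx : 0 < x)
  rw [norm_of_nonneg (g3pKernel_pos γ a b hx).le]
  exact g3pKernel_le γ a b hx.le

lemma g3pNorm_pos (γ : ℕ) (a : ℝ) {b : ℝ} (hb : b < 0) : 0 < g3pNorm γ a b := by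
  rw [g3pNorm, setIntegral_pos_iff_support_of_nonneg_ae
    ((ae_restrict_iff' measurableSet_Ioi).2 (ae_of_all _ fun x hx => (g3pKernel_pos γ a b hx).le))
    (integrableOn_g3pKernel γ a hb)]
  have h : Ioi (0 : ℝ) ⊆ Function.support (g3pKernel γ a b) ∩ Ioi 0 :=
    fun x hx => ⟨(g3pKernel_pos γ a b hx).ne', hx⟩
  exact (measure_mono h).trans_lt' (by simp)

/-- `N(γ,a,b) / N(γ,0,b)`, where `N(γ,0,b) = γ! / (-b)^(γ+1)` normalizes the Gamma density. -/
noncomputable def g3pNormRatio (γ : ℕ) (a b : ℝ) : ℝ :=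
  g3pNorm γ a b * ((-b) ^ (γ + 1) / γ !)

lemma g3pNormRatio_pos (γ : ℕ) (a : ℝ) {b : ℝ} (hb : b < 0) : 0 < g3pNormRatio γ a b := by
  have hb' : 0 < -b := neg_pos.2 hb
  have := g3pNorm_pos γ a hb
  unfold g3pNormRatio; positivity

lemma g3pNormRatio_le_one (γ : ℕ) (a : ℝ) {b : ℝ} (hb : b < 0) :
    g3pNormRatio γ a b ≤ 1 := by
  have hN : g3pNorm γ a b ≤ γ ! / (-b) ^ (γ + 1) := by
    rw [← integral_pow_mul_exp_mul_Ioi γ hb]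
    exact setIntegral_mono_on (integrableOn_g3pKernel γ a hb)
      (integrableOn_pow_mul_exp_mul_Ioi γ hb) measurableSet_Ioi
      fun x hx => g3pKernel_le γ a b (le_of_lt hx)
  have hb' : 0 < -b := neg_pos.2 hb
  rw [g3pNormRatio, ← le_div_iff₀ (by positivity), one_div_div]
  exact hN

lemma one_sub_le_g3pNormRatio (γ : ℕ) (a : ℝ) {b : ℝ} (hb : b < 0) :
    1 - (γ + 1) * (γ + 2) * (a / b) ^ 2 ≤ g3pNormRatio γ a b := by
  have hN : γ ! / (-b) ^ (γ + 1) - a ^ 2 * ((γ + 2)! / (-b) ^ (γ + 3)) ≤ g3pNorm γ a b := by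
    rw [← integral_pow_mul_exp_mul_Ioi γ hb, ← integral_pow_mul_exp_mul_Ioi (γ + 2) hb,
      ← integral_const_mul, ← integral_sub (integrableOn_pow_mul_exp_mul_Ioi γ hb)
        ((integrableOn_pow_mul_exp_mul_Ioi (γ + 2) hb).const_mul _)]
    exact setIntegral_mono_on ((integrableOn_pow_mul_exp_mul_Ioi γ hb).sub
      ((integrableOn_pow_mul_exp_mul_Ioi (γ + 2) hb).const_mul _)) (integrableOn_g3pKernel γ a hb)
      measurableSet_Ioi fun x hx => sub_le_g3pKernel γ a b (le_of_lt hx)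
  have hb' : 0 < -b := neg_pos.2 hb
  have hb0 : b ≠ 0 := hb.ne
  calc 1 - (γ + 1) * (γ + 2) * (a / b) ^ 2
      = (γ ! / (-b) ^ (γ + 1) - a ^ 2 * ((γ + 2)! / (-b) ^ (γ + 3))) *
          ((-b) ^ (γ + 1) / γ !) := by
        simp only [Nat.factorial_succ]; push_cast; field_simp; ring
    _ ≤ g3pNormRatio γ a b := by rw [g3pNormRatio]; gcongr

lemma gammaShapeRateDensity_div_g3pDensity (γ : ℕ) (a : ℝ) {b x : ℝ} (hb : b < 0)
    (hx : 0 < x) :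
    gammaShapeRateDensity γ b x / g3pDensity γ a b x =
      g3pNormRatio γ a b * exp (a ^ 2 * x ^ 2) := by
  have hN := g3pNorm_pos γ a hb
  rw [gammaShapeRateDensity, g3pDensity, g3pKernel_eq, g3pNormRatio, exp_neg]
  field_simp

lemma integral_gammaShapeRateDensity_mul_log_div_g3pDensity (γ : ℕ) (a : ℝ) {b : ℝ}
    (hb : b < 0) :
    ∫ x in Ioi (0 : ℝ), gammaShapeRateDensity γ b x *
        log (gammaShapeRateDensity γ b x / g3pDensity γ a b x)
      = log (g3pNormRatio γ a b) + (γ + 1) * (γ + 2) * (a / b) ^ 2 := by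
  set C : ℝ := (-b) ^ (γ + 1) / (γ ! : ℝ)
  have hint : EqOn (fun x => gammaShapeRateDensity γ b x *
        log (gammaShapeRateDensity γ b x / g3pDensity γ a b x))
      (fun x => C * log (g3pNormRatio γ a b) * (x ^ γ * exp (b * x))
        + C * a ^ 2 * (x ^ (γ + 2) * exp (b * x))) (Ioi 0) := by
    intro x (hx : 0 < x)
    dsimp only
    rw [gammaShapeRateDensity_div_g3pDensity γ a hb hx,
      log_mul (g3pNormRatio_pos γ a hb).ne' (exp_pos _).ne', log_exp, gammaShapeRateDensity]
    ring
  have hb0 : -b ≠ 0 := (neg_pos.2 hb).ne'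
  rw [setIntegral_congr_fun measurableSet_Ioi hint, integral_add
    ((integrableOn_pow_mul_exp_mul_Ioi γ hb).const_mul _)
    ((integrableOn_pow_mul_exp_mul_Ioi (γ + 2) hb).const_mul _), integral_const_mul,
    integral_const_mul, integral_pow_mul_exp_mul_Ioi γ hb,
    integral_pow_mul_exp_mul_Ioi (γ + 2) hb]
  simp only [C, Nat.factorial_succ]
  push_cast
  rw [show (a / b) ^ 2 = (a / -b) ^ 2 by rw [div_neg, neg_sq]]
  generalize -b = c at hb0 ⊢
  field_simp
  ring

theorem kl_gamma_g3p_tendsto_zero_general (γ : ℕ) (α β : ℕ → ℝ)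
    (hβ : ∀ n, β n < 0)
    (hlim : Tendsto (fun n => β n / α n) atTop atBot) :
    Tendsto (fun n => ∫ x in Set.Ioi (0 : ℝ),
        gammaShapeRateDensity γ (β n) x *
          Real.log (gammaShapeRateDensity γ (β n) x / g3pDensity γ (α n) (β n) x))
      atTop (nhds 0) := by
  have hsq : Tendsto (fun n => (α n / β n) ^ 2) atTop (nhds 0) := by
    simpa only [Function.comp_def, inv_div, zero_pow two_ne_zero] using
      (tendsto_inv_atBot_zero.comp hlim).pow 2
  have hratio : Tendsto (fun n => g3pNormRatio γ (α n) (β n)) atTop (nhds 1) := by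
    refine tendsto_of_tendsto_of_tendsto_of_le_of_le ?_ tendsto_const_nhds
      (fun n => one_sub_le_g3pNormRatio γ (α n) (hβ n))
      (fun n => g3pNormRatio_le_one γ (α n) (hβ n))
    simpa using (hsq.const_mul ((γ + 1) * (γ + 2) : ℝ)).const_sub 1
  simp_rw [integral_gammaShapeRateDensity_mul_log_div_g3pDensity γ _ (hβ _)]
  simpa using ((continuousAt_log one_ne_zero).tendsto.comp hratio).add
    (hsq.const_mul ((γ + 1) * (γ + 2) : ℝ))

/-- Proposition 2: the KL divergence between `G3p(γ,αₙ,βₙ)` and the Gamma distribution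
with shape `γ+1` and rate `−βₙ` goes to zero when `βₙ/αₙ → −∞`. -/
theorem kl_gamma_g3p_tendsto_zero (γ : ℕ) (hγ : 0 < γ) (α β : ℕ → ℝ)
    (hα : ∀ n, 0 < α n) (hβ : ∀ n, β n < 0)
    (hlim : Tendsto (fun n => β n / α n) atTop atBot) :
    Tendsto (fun n => ∫ x in Set.Ioi (0 : ℝ),
        gammaShapeRateDensity γ (β n) x *
          Real.log (gammaShapeRateDensity γ (β n) x / g3pDensity γ (α n) (β n) x))
      atTop (nhds 0) :=
  kl_gamma_g3p_tendsto_zero_general γ α β hβ hlim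
end

section
/- Let γ be a positive integer, α > 0, β ∈ ℝ, and d > 0, c > 0. Let N = ∫₀^∞ x^γ e^{−α²x² + βx} dx, let q(x) = x^γ e^{−α²x² + βx}/N be the three-parameter Gamma density G3p(γ,α,β) on (0,∞), and let p(x) = (c^d/Γ(d)) x^{d−1} e^{−cx} be the Gamma(d,c) density on (0,∞). Then ∫₀^∞ p(x) log(p(x)/q(x)) dx = (γ+1) log c + (d−1−γ)·Γ′(d)/Γ(d) − d − log Γ(d) + α² d(d+1)/c² − β d/c + log N. -/
/-!
For `x > 0`, `log (p x / q x)` is an explicit combination of `1`, `log x`, `x²` and `x`, so the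
divergence is the same combination of the Gamma(d, c) moments `1`, `ψ(d) - log c`,
`d (d + 1) / c²` and `d / c`. The logarithmic moment comes from differentiating
`Γ(s) = ∫ t ^ (s - 1) e^{-t} dt` under the integral sign and substituting `t = c x`;
its integrability from `|log x| ≤ (x ^ ε + x ^ (-ε)) / ε`.
-/

open MeasureTheory Set Real

theorem Real.deriv_Gamma_eq_integral {s : ℝ} (hs : 0 < s) :
    deriv Gamma s = ∫ t in Ioi 0, t ^ (s - 1) * (log t * exp (-t)) := by
  have hGamma : HasDerivAt Complex.Gamma
      (∫ t : ℝ in Ioi 0, (t : ℂ) ^ ((s : ℂ) - 1) * (log t * exp (-t))) s := by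
    refine (Complex.hasDerivAt_GammaIntegral (by simpa using hs)).congr_of_eventuallyEq ?_
    filter_upwards [(Complex.continuous_re.isOpen_preimage _ isOpen_Ioi).mem_nhds
      (by simpa using hs)] with z hz using Complex.Gamma_eq_integral hz
  have hint : ∫ t : ℝ in Ioi 0, (t : ℂ) ^ ((s : ℂ) - 1) * (log t * exp (-t))
      = ((∫ t in Ioi 0, t ^ (s - 1) * (log t * exp (-t)) : ℝ) : ℂ) := by
    rw [← integral_complex_ofReal]
    refine setIntegral_congr_fun measurableSet_Ioi fun t ht => ?_
    simp only [Complex.ofReal_mul, Complex.ofReal_cpow (le_of_lt ht), Complex.ofReal_sub,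
      Complex.ofReal_one]
  have := hGamma.real_of_complex
  rw [hint, Complex.ofReal_re] at this
  exact this.deriv

theorem abs_log_le_rpow_add_rpow_neg {x ε : ℝ} (hx : 0 < x) (hε : 0 < ε) :
    |log x| ≤ (x ^ ε + x ^ (-ε)) / ε := by
  have h₁ := log_le_rpow_div hx.le hε
  have h₂ := log_le_rpow_div (inv_pos.2 hx).le hε
  rw [log_inv, inv_rpow hx.le, ← rpow_neg hx.le] at h₂
  have : 0 ≤ x ^ ε / ε := by positivity
  have : 0 ≤ x ^ (-ε) / ε := by positivity
  rw [add_div]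
  exact abs_le.2 ⟨by linarith, by linarith⟩

theorem integrableOn_rpow_mul_exp_neg_mul {s c : ℝ} (hs : 0 < s) (hc : 0 < c) :
    IntegrableOn (fun x => x ^ (s - 1) * exp (-c * x)) (Ioi 0) := by
  simpa using integrableOn_rpow_mul_exp_neg_mul_rpow (p := 1) (by linarith) one_pos hc

theorem integrableOn_rpow_mul_exp_neg_mul_log {s c : ℝ} (hs : 0 < s) (hc : 0 < c) :
    IntegrableOn (fun x => x ^ (s - 1) * exp (-c * x) * log x) (Ioi 0) := by
  have hε : 0 < s / 2 := by positivity
  have hdom := ((integrableOn_rpow_mul_exp_neg_mul (s := s + s / 2) (by positivity) hc).add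
    (integrableOn_rpow_mul_exp_neg_mul (s := s - s / 2) (by linarith) hc)).div_const (s / 2)
  refine hdom.mono' ?_ ?_
  · exact (by fun_prop : Measurable fun x : ℝ => x ^ (s - 1) * exp (-c * x) * log x)
      |>.aestronglyMeasurable
  · filter_upwards [ae_restrict_mem measurableSet_Ioi] with x hx
    have hx : 0 < x := hx
    rw [norm_mul, norm_of_nonneg (by positivity), norm_eq_abs, Pi.add_apply,
      show s + s / 2 - 1 = s - 1 + s / 2 by ring, show s - s / 2 - 1 = s - 1 + -(s / 2) by ring,
      rpow_add hx, rpow_add hx]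
    calc x ^ (s - 1) * exp (-c * x) * |log x|
        ≤ x ^ (s - 1) * exp (-c * x) * ((x ^ (s / 2) + x ^ (-(s / 2))) / (s / 2)) :=
          mul_le_mul_of_nonneg_left (abs_log_le_rpow_add_rpow_neg hx hε) (by positivity)
      _ = _ := by ring

theorem integral_rpow_mul_exp_neg_mul_log {s c : ℝ} (hs : 0 < s) (hc : 0 < c) :
    ∫ x in Ioi 0, x ^ (s - 1) * exp (-c * x) * log x =
      (deriv Gamma s - log c * Gamma s) / c ^ s := by
  set g : ℝ → ℝ := fun t => t ^ (s - 1) * (log t * exp (-t))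
  have hg : IntegrableOn (fun x => g (c * x)) (Ioi 0) := by
    rw [integrableOn_Ioi_comp_mul_left_iff g 0 hc, mul_zero]
    refine (integrableOn_rpow_mul_exp_neg_mul_log hs one_pos).congr_fun (fun t _ => ?_)
      measurableSet_Ioi
    simp only [g, neg_one_mul]
    ring
  have hsplit : EqOn (fun x => x ^ (s - 1) * exp (-c * x) * log x)
      (fun x => c ^ (1 - s) * g (c * x) - log c * (x ^ (s - 1) * exp (-c * x))) (Ioi 0) := by
    intro x hx
    have hx : 0 < x := hx
    have hcs : c ^ (1 - s) * c ^ (s - 1) = 1 := by rw [← rpow_add hc]; norm_num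
    simp only [g, mul_rpow hc.le hx.le, log_mul hc.ne' hx.ne', neg_mul]
    linear_combination (-(x ^ (s - 1) * exp (-(c * x)) * (log c + log x))) * hcs
  rw [setIntegral_congr_fun measurableSet_Ioi hsplit,
    integral_sub (hg.const_mul _) ((integrableOn_rpow_mul_exp_neg_mul hs hc).const_mul _),
    integral_const_mul, integral_const_mul, integral_comp_mul_left_Ioi g 0 hc, mul_zero,
    ← Real.deriv_Gamma_eq_integral hs]
  simp_rw [neg_mul]
  rw [integral_rpow_mul_exp_neg_mul_Ioi hs hc, smul_eq_mul, rpow_sub hc, rpow_one, one_div,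
    inv_rpow hc.le]
  field_simp

theorem integrableOn_pow_mul_exp_neg_mul_sq_add {a : ℝ} (ha : 0 < a) (b : ℝ) (n : ℕ) :
    IntegrableOn (fun x => x ^ n * exp (-a * x ^ 2 + b * x)) (Ioi 0) := by
  have hdom := ((integrableOn_rpow_mul_exp_neg_mul_sq (half_pos ha) (s := n)
    (by linarith [n.cast_nonneg (α := ℝ)])).const_mul (exp (b ^ 2 / (2 * a))))
  refine hdom.mono' ((by fun_prop : Continuous fun x : ℝ => x ^ n * exp (-a * x ^ 2 + b * x))
    |>.aestronglyMeasurable) ?_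
  filter_upwards [ae_restrict_mem measurableSet_Ioi] with x hx
  have hx : 0 < x := hx
  -- complete the square, keeping half of the Gaussian decay
  have hsq : -a * x ^ 2 + b * x ≤ b ^ 2 / (2 * a) + -(a / 2) * x ^ 2 := by
    have hgap : b ^ 2 / (2 * a) + -(a / 2) * x ^ 2 - (-a * x ^ 2 + b * x) =
        (b - a * x) ^ 2 / (2 * a) := by
      field_simp; ring
    have : 0 ≤ (b - a * x) ^ 2 / (2 * a) := by positivity
    linarith
  rw [norm_of_nonneg (by positivity), rpow_natCast, mul_left_comm, ← exp_add]
  exact mul_le_mul_of_nonneg_left (exp_le_exp.2 hsq) (by positivity)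

theorem integral_pow_mul_exp_neg_mul_sq_add_pos {a : ℝ} (ha : 0 < a) (b : ℝ) (n : ℕ) :
    0 < ∫ x in Ioi 0, x ^ n * exp (-a * x ^ 2 + b * x) := by
  rw [setIntegral_pos_iff_support_of_nonneg_ae _ (integrableOn_pow_mul_exp_neg_mul_sq_add ha b n)]
  · have : Function.support (fun x : ℝ => x ^ n * exp (-a * x ^ 2 + b * x)) ∩ Ioi 0 = Ioi 0 :=
      inter_eq_right.2 fun x (hx : 0 < x) => Function.mem_support.2 (by positivity)
    rw [this, volume_Ioi]
    exact WithTop.top_pos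
  · filter_upwards [ae_restrict_mem measurableSet_Ioi] with x (hx : 0 < x)
    positivity

noncomputable def gammaDensity (d c x : ℝ) : ℝ := c ^ d / Gamma d * x ^ (d - 1) * exp (-c * x)

section GammaMoments

variable {d c : ℝ}

theorem gammaDensity_mul_pow_eq {x : ℝ} (hx : 0 < x) (n : ℕ) :
    gammaDensity d c x * x ^ n = c ^ d / Gamma d * (x ^ (d + n - 1) * exp (-c * x)) := by
  rw [gammaDensity, show d + n - 1 = d - 1 + n by ring, rpow_add hx, rpow_natCast]
  ring

theorem integrableOn_gammaDensity_mul_pow (hd : 0 < d) (hc : 0 < c) (n : ℕ) :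
    IntegrableOn (fun x => gammaDensity d c x * x ^ n) (Ioi 0) :=
  IntegrableOn.congr_fun ((integrableOn_rpow_mul_exp_neg_mul (by positivity) hc).const_mul _)
    (fun _ hx => (gammaDensity_mul_pow_eq hx n).symm) measurableSet_Ioi

theorem integral_gammaDensity_mul_pow (hd : 0 < d) (hc : 0 < c) (n : ℕ) :
    ∫ x in Ioi 0, gammaDensity d c x * x ^ n = Gamma (d + n) / (Gamma d * c ^ n) := by
  rw [setIntegral_congr_fun measurableSet_Ioi fun _ hx => gammaDensity_mul_pow_eq hx n,
    integral_const_mul]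
  simp_rw [neg_mul]
  rw [integral_rpow_mul_exp_neg_mul_Ioi (by positivity) hc, div_rpow one_pos.le hc.le, one_rpow,
    rpow_add hc, rpow_natCast]
  have := Gamma_pos_of_pos hd
  field_simp

theorem integrableOn_gammaDensity_mul_log (hd : 0 < d) (hc : 0 < c) :
    IntegrableOn (fun x => gammaDensity d c x * log x) (Ioi 0) := by
  simpa only [IntegrableOn, gammaDensity, mul_assoc] using
    (integrableOn_rpow_mul_exp_neg_mul_log hd hc).const_mul (c ^ d / Gamma d)

theorem integral_gammaDensity_mul_log (hd : 0 < d) (hc : 0 < c) :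
    ∫ x in Ioi 0, gammaDensity d c x * log x = deriv Gamma d / Gamma d - log c := by
  simp only [gammaDensity, mul_assoc]
  rw [integral_const_mul]
  simp only [← mul_assoc]
  rw [integral_rpow_mul_exp_neg_mul_log hd hc]
  have := Gamma_pos_of_pos hd
  have : 0 < c ^ d := by positivity
  field_simp

theorem integral_gammaDensity_mul_quadratic_add_log (hd : 0 < d) (hc : 0 < c) (a b e f : ℝ) :
    ∫ x in Ioi 0, gammaDensity d c x * (a + b * log x + e * x ^ 2 + f * x) =
      a + b * (deriv Gamma d / Gamma d - log c) + e * (d * (d + 1) / c ^ 2) + f * (d / c) := by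
  have hp n := integrableOn_gammaDensity_mul_pow hd hc n
  have ha := (hp 0).const_mul a
  have hb := (integrableOn_gammaDensity_mul_log hd hc).const_mul b
  have he := (hp 2).const_mul e
  have hf := (hp 1).const_mul f
  have hexpand : ∀ x, gammaDensity d c x * (a + b * log x + e * x ^ 2 + f * x) =
      a * (gammaDensity d c x * x ^ 0) + b * (gammaDensity d c x * log x) +
        e * (gammaDensity d c x * x ^ 2) + f * (gammaDensity d c x * x ^ 1) := fun x => by ring
  simp_rw [hexpand]
  rw [integral_add, integral_add, integral_add, integral_const_mul, integral_const_mul,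
    integral_const_mul, integral_const_mul, integral_gammaDensity_mul_pow hd hc,
    integral_gammaDensity_mul_pow hd hc, integral_gammaDensity_mul_pow hd hc,
    integral_gammaDensity_mul_log hd hc]
  have := Gamma_pos_of_pos hd
  have h1 : Gamma (d + 1) = d * Gamma d := Gamma_add_one hd.ne'
  have h2 : Gamma (d + 2) = (d + 1) * (d * Gamma d) := by
    rw [show d + 2 = d + 1 + 1 by ring, Gamma_add_one (by positivity), h1]
  push_cast
  rw [add_zero, h1, h2]
  · field_simp
  exacts [ha, hb, ha.add hb, he, (ha.add hb).add he, hf]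

end GammaMoments

theorem log_gammaDensity_div_pow_mul_exp {d c a b N x : ℝ} (n : ℕ) (hd : 0 < d) (hc : 0 < c)
    (hN : 0 < N) (hx : 0 < x) :
    log (gammaDensity d c x / (x ^ n * exp (-a * x ^ 2 + b * x) / N)) =
      (d * log c - log (Gamma d) + log N) + (d - 1 - n) * log x + a * x ^ 2 + -(b + c) * x := by
  have := Gamma_pos_of_pos hd
  rw [gammaDensity, log_div (by positivity) (by positivity),
    log_mul (by positivity) (by positivity), log_mul (by positivity) (by positivity),
    log_div (by positivity) this.ne', log_rpow hc, log_rpow hx, log_exp,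
    log_div (by positivity) hN.ne', log_mul (by positivity) (by positivity), log_pow, log_exp]
  ring

theorem kl_gamma_g3p_closed_form_general (γ : ℕ) (α β d c : ℝ)
    (hα : 0 < α) (hd : 0 < d) (hc : 0 < c)
    (N : ℝ) (hN : N = ∫ x in Set.Ioi (0 : ℝ), x ^ γ * Real.exp (-α ^ 2 * x ^ 2 + β * x)) :
    ∫ x in Set.Ioi (0 : ℝ),
        (c ^ d / Real.Gamma d * x ^ (d - 1) * Real.exp (-c * x)) *
          Real.log ((c ^ d / Real.Gamma d * x ^ (d - 1) * Real.exp (-c * x)) /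
            (x ^ γ * Real.exp (-α ^ 2 * x ^ 2 + β * x) / N)) =
      ((γ : ℝ) + 1) * Real.log c + (d - 1 - γ) * (deriv Real.Gamma d / Real.Gamma d) - d -
        Real.log (Real.Gamma d) + α ^ 2 * d * (d + 1) / c ^ 2 - β * d / c + Real.log N := by
  have hNpos : 0 < N := hN ▸ integral_pow_mul_exp_neg_mul_sq_add_pos (by positivity) β γ
  change ∫ x in Ioi 0, gammaDensity d c x *
    log (gammaDensity d c x / (x ^ γ * exp (-α ^ 2 * x ^ 2 + β * x) / N)) = _
  rw [setIntegral_congr_fun measurableSet_Ioi fun x hx =>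
      congrArg _ (log_gammaDensity_div_pow_mul_exp γ hd hc hNpos hx),
    integral_gammaDensity_mul_quadratic_add_log hd hc]
  field_simp
  ring

/-- Closed form for the Kullback–Leibler divergence `KL(Gamma(d,c) ∥ G3p(γ,α,β))`. -/
theorem kl_gamma_g3p_closed_form (γ : ℕ) (hγ : 0 < γ) (α β d c : ℝ)
    (hα : 0 < α) (hd : 0 < d) (hc : 0 < c)
    (N : ℝ) (hN : N = ∫ x in Set.Ioi (0 : ℝ), x ^ γ * Real.exp (-α ^ 2 * x ^ 2 + β * x)) :
    ∫ x in Set.Ioi (0 : ℝ),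
        (c ^ d / Real.Gamma d * x ^ (d - 1) * Real.exp (-c * x)) *
          Real.log ((c ^ d / Real.Gamma d * x ^ (d - 1) * Real.exp (-c * x)) /
            (x ^ γ * Real.exp (-α ^ 2 * x ^ 2 + β * x) / N)) =
      ((γ : ℝ) + 1) * Real.log c + (d - 1 - γ) * (deriv Real.Gamma d / Real.Gamma d) - d -
        Real.log (Real.Gamma d) + α ^ 2 * d * (d + 1) / c ^ 2 - β * d / c + Real.log N :=
  kl_gamma_g3p_closed_form_general γ α β d c hα hd hc N hN
end

section
/- For every real ν > 0, lim_{z → −∞} [∫₀^∞ t^{ν} e^{−t²/2 − zt} dt] / [(−z) · ∫₀^∞ t^{ν−1} e^{−t²/2 − zt} dt] = 1. -/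
/-!
Put `s = -z`. Completing the square, `t ^ p * exp (-t ^ 2 / 2 - z * t)` is `exp (s ^ 2 / 2)`
times `weight p s t = t ^ p * exp (-(t - s) ^ 2 / 2)`, so the ratio in question is the mean of
`t / s` for the weight `t ^ (ν - 1) * exp (-(t - s) ^ 2 / 2)` on `(0, ∞)`: a Gaussian bump at `s`
times a power. Its total mass is at least of order `s ^ (ν - 1)` (look at the window
`(s, s + 1]`), whereas the mass below `r * s` (`r < 1`) and the first moment above `r * s`
(`r > 1`) are `O(s ^ ν e^{-c s²})` for some `c > 0`. Hence the mean of `t / s` is at least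
`r (1 - o(1))` for every `r < 1` and at most `r + o(1)` for every `r > 1`.
-/

open MeasureTheory Filter Set Real Topology

section FirstMoment

variable {f g : ℝ → ℝ} (hfg : ∀ t ∈ Ioi (0 : ℝ), g t = t * f t)
  (hf0 : ∀ t ∈ Ioi (0 : ℝ), 0 ≤ f t) (hf : IntegrableOn f (Ioi 0))
  (hg : IntegrableOn g (Ioi 0))
include hfg hf0 hf hg

theorem mul_sub_setIntegral_Ioc_le_of_eq_mul {a : ℝ} (ha : 0 ≤ a) :
    a * ((∫ t in Ioi 0, f t) - ∫ t in Ioc 0 a, f t) ≤ ∫ t in Ioi 0, g t := by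
  have hsplit : (∫ t in Ioi 0, f t) - ∫ t in Ioc 0 a, f t = ∫ t in Ioi a, f t := by
    rw [← Ioc_union_Ioi_eq_Ioi ha, setIntegral_union Ioc_disjoint_Ioi_same measurableSet_Ioi
      (hf.mono_set Ioc_subset_Ioi_self) (hf.mono_set (Ioi_subset_Ioi ha)), add_sub_cancel_left]
  have hsub : Ioi a ⊆ Ioi 0 := Ioi_subset_Ioi ha
  calc a * ((∫ t in Ioi 0, f t) - ∫ t in Ioc 0 a, f t) = ∫ t in Ioi a, a * f t := by
        rw [hsplit, integral_const_mul]
    _ ≤ ∫ t in Ioi a, g t :=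
        setIntegral_mono_on ((hf.mono_set hsub).const_mul a) (hg.mono_set hsub) measurableSet_Ioi
          fun t ht => by
            rw [hfg t (hsub ht)]
            exact mul_le_mul_of_nonneg_right (le_of_lt ht) (hf0 t (hsub ht))
    _ ≤ ∫ t in Ioi 0, g t :=
        setIntegral_mono_set hg
          ((ae_restrict_iff' measurableSet_Ioi).2 (ae_of_all _ fun t ht => by
            rw [hfg t ht]; exact mul_nonneg (le_of_lt ht) (hf0 t ht)))
          hsub.eventuallyLE

theorem setIntegral_le_mul_add_setIntegral_Ioi_of_eq_mul {b : ℝ} (hb : 0 ≤ b) :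
    ∫ t in Ioi 0, g t ≤ b * (∫ t in Ioi 0, f t) + ∫ t in Ioi b, g t := by
  rw [← Ioc_union_Ioi_eq_Ioi hb, setIntegral_union Ioc_disjoint_Ioi_same measurableSet_Ioi
    (hg.mono_set Ioc_subset_Ioi_self) (hg.mono_set (Ioi_subset_Ioi hb)), Ioc_union_Ioi_eq_Ioi hb]
  gcongr
  calc ∫ t in Ioc 0 b, g t ≤ ∫ t in Ioc 0 b, b * f t :=
        setIntegral_mono_on (hg.mono_set Ioc_subset_Ioi_self)
          ((hf.mono_set Ioc_subset_Ioi_self).const_mul b) measurableSet_Ioc fun t ht => by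
            rw [hfg t ht.1]; exact mul_le_mul_of_nonneg_right ht.2 (hf0 t ht.1)
    _ = b * ∫ t in Ioc 0 b, f t := integral_const_mul b _
    _ ≤ b * ∫ t in Ioi 0, f t :=
        mul_le_mul_of_nonneg_left (setIntegral_mono_set hf
          ((ae_restrict_iff' measurableSet_Ioi).2 (ae_of_all _ hf0))
          Ioc_subset_Ioi_self.eventuallyLE) hb

end FirstMoment

theorem tendsto_add_one_mul_exp_neg_mul_sq {a : ℝ} (ha : 0 < a) :
    Tendsto (fun s : ℝ => (s + 1) * exp (-a * s ^ 2)) atTop (𝓝 0) := by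
  have h (r : ℝ) :=
    (tendsto_rpow_abs_mul_exp_neg_mul_sq_cocompact ha r).mono_left atTop_le_cocompact
  rw [← add_zero (0 : ℝ)]
  refine ((h 1).add (h 0)).congr' ?_
  filter_upwards [eventually_ge_atTop 0] with s hs
  rw [rpow_one, rpow_zero, abs_of_nonneg hs, add_mul, one_mul]

namespace ParabolicCylinder

noncomputable def weight (p s t : ℝ) : ℝ := t ^ p * exp (-(t - s) ^ 2 / 2)

variable {p s ν r : ℝ}

theorem weight_nonneg {t : ℝ} (ht : 0 ≤ t) : 0 ≤ weight p s t :=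
  mul_nonneg (rpow_nonneg ht p) (exp_pos _).le

theorem weight_eq_mul_weight_sub_one {t : ℝ} (ht : 0 < t) :
    weight p s t = t * weight (p - 1) s t := by
  rw [weight, weight, ← mul_assoc, rpow_sub ht, rpow_one, mul_div_cancel₀ _ ht.ne']

theorem integrableOn_weight (hp : -1 < p) (s : ℝ) : IntegrableOn (weight p s) (Ioi 0) := by
  have hdom := (integrableOn_rpow_mul_exp_neg_mul_sq (b := 1 / 4) (by norm_num) hp).const_mul
    (exp (s ^ 2))
  refine hdom.mono' (by unfold weight; fun_prop) <|
    (ae_restrict_iff' measurableSet_Ioi).2 (ae_of_all _ fun t ht => ?_)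
  have ht : (0 : ℝ) < t := ht
  rw [norm_of_nonneg (weight_nonneg ht.le), weight, mul_left_comm, ← exp_add]
  gcongr
  nlinarith [sq_nonneg (t / 2 - s)]

theorem mul_exp_le_integral_weight (hν : 0 < ν) (hs : 0 < s) :
    s ^ ν / (s + 1) * exp (-1 / 2) ≤ ∫ t in Ioi 0, weight (ν - 1) s t := by
  have hsub : Ioc s (s + 1) ⊆ Ioi 0 := fun t ht => hs.trans ht.1
  have hint := integrableOn_weight (p := ν - 1) (by linarith) s
  calc s ^ ν / (s + 1) * exp (-1 / 2)
      = s ^ ν / (s + 1) * exp (-1 / 2) * volume.real (Ioc s (s + 1)) := by simp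
    _ ≤ ∫ t in Ioc s (s + 1), weight (ν - 1) s t :=
        setIntegral_ge_of_const_le_real measurableSet_Ioc (by simp) (fun t ht => ?_)
          (hint.mono_set hsub)
    _ ≤ ∫ t in Ioi 0, weight (ν - 1) s t :=
        setIntegral_mono_set hint ((ae_restrict_iff' measurableSet_Ioi).2
          (ae_of_all _ fun _ ht => weight_nonneg (le_of_lt ht))) hsub.eventuallyLE
  have ht0 : 0 < t := hs.trans ht.1
  rw [weight, rpow_sub ht0, rpow_one]
  gcongr
  · exact ht.1.le
  · exact ht.2
  · nlinarith [ht.1, ht.2]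

theorem setIntegral_Ioc_weight_le (hν : 0 < ν) (hr0 : 0 ≤ r) (hr1 : r ≤ 1) (hs : 0 ≤ s) :
    ∫ t in Ioc 0 (r * s), weight (ν - 1) s t ≤
      s ^ ν / ν * exp (-((1 - r) ^ 2 / 2) * s ^ 2) := by
  have hrs : 0 ≤ r * s := mul_nonneg hr0 hs
  have hrpow : ∫ t in Ioc 0 (r * s), t ^ (ν - 1) = (r * s) ^ ν / ν := by
    rw [← intervalIntegral.integral_of_le hrs, integral_rpow (Or.inl (by linarith)),
      sub_add_cancel, zero_rpow hν.ne', sub_zero]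
  calc ∫ t in Ioc 0 (r * s), weight (ν - 1) s t
      ≤ ∫ t in Ioc 0 (r * s), t ^ (ν - 1) * exp (-((1 - r) ^ 2 / 2) * s ^ 2) := by
        refine setIntegral_mono_on
          ((integrableOn_weight (by linarith) s).mono_set Ioc_subset_Ioi_self)
          ((intervalIntegral.intervalIntegrable_rpow' (by linarith)).1.mul_const _)
          measurableSet_Ioc fun t ht => ?_
        refine mul_le_mul_of_nonneg_left (exp_le_exp.2 ?_) (rpow_nonneg ht.1.le _)
        have hfar : (1 - r) * s ≤ s - t := by linarith [ht.2]
        nlinarith [pow_le_pow_left₀ (mul_nonneg (sub_nonneg.2 hr1) hs) hfar 2]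
    _ = (r * s) ^ ν / ν * exp (-((1 - r) ^ 2 / 2) * s ^ 2) := by
        rw [integral_mul_const, hrpow]
    _ ≤ s ^ ν / ν * exp (-((1 - r) ^ 2 / 2) * s ^ 2) := by
        gcongr
        nlinarith

theorem setIntegral_Ioi_weight_le (hp : -1 < p) (hr : 1 < r) (hs : 0 ≤ s) :
    ∫ t in Ioi (r * s), weight p s t ≤
      (∫ t in Ioi 0, t ^ p * exp (-((r - 1) ^ 2 / (4 * r ^ 2)) * t ^ 2)) *
        exp (-((r - 1) ^ 2 / 4) * s ^ 2) := by
  have hrs : 0 ≤ r * s := by positivity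
  have hsub : Ioi (r * s) ⊆ Ioi 0 := Ioi_subset_Ioi hrs
  have hgauss := integrableOn_rpow_mul_exp_neg_mul_sq
    (b := (r - 1) ^ 2 / (4 * r ^ 2)) (by have := sub_pos.2 hr; positivity) hp
  rw [← integral_mul_const]
  calc ∫ t in Ioi (r * s), weight p s t
      ≤ ∫ t in Ioi (r * s), t ^ p * exp (-((r - 1) ^ 2 / (4 * r ^ 2)) * t ^ 2) *
          exp (-((r - 1) ^ 2 / 4) * s ^ 2) := by
        refine setIntegral_mono_on ((integrableOn_weight hp s).mono_set hsub)
          ((hgauss.mono_set hsub).mul_const _) measurableSet_Ioi fun t (ht : r * s < t) => ?_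
        have ht0 : 0 < t := hrs.trans_lt ht
        rw [weight, mul_assoc, ← exp_add]
        refine mul_le_mul_of_nonneg_left (exp_le_exp.2 ?_) (rpow_nonneg ht0.le _)
        -- half of `(t - s)²/2` controls `s²`, the other half controls `t²`
        have hfar : (r - 1) * s ≤ t - s := by linarith
        have hfar' : (r - 1) * t ≤ r * (t - s) := by linarith
        have hsq : ((r - 1) * s) ^ 2 ≤ (t - s) ^ 2 :=
          pow_le_pow_left₀ (mul_nonneg (sub_nonneg.2 hr.le) hs) hfar 2
        have hsq' : (r - 1) ^ 2 / (4 * r ^ 2) * t ^ 2 ≤ (t - s) ^ 2 / 4 := by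
          rw [div_mul_eq_mul_div, div_le_div_iff₀ (by positivity) (by norm_num)]
          nlinarith [pow_le_pow_left₀ (mul_nonneg (sub_nonneg.2 hr.le) ht0.le) hfar' 2]
        nlinarith
    _ ≤ _ := by
        refine setIntegral_mono_set (hgauss.mul_const _) ?_ hsub.eventuallyLE
        exact (ae_restrict_iff' measurableSet_Ioi).2
          (ae_of_all _ fun t (ht : 0 < t) => by positivity)

theorem integral_weight_pos (hν : 0 < ν) (hs : 0 < s) : 0 < ∫ t in Ioi 0, weight (ν - 1) s t :=
  (by positivity : 0 < s ^ ν / (s + 1) * exp (-1 / 2)).trans_le (mul_exp_le_integral_weight hν hs)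

theorem tendsto_setIntegral_Ioc_weight_div (hν : 0 < ν) (hr0 : 0 ≤ r) (hr1 : r < 1) :
    Tendsto (fun s => (∫ t in Ioc 0 (r * s), weight (ν - 1) s t) /
      ∫ t in Ioi 0, weight (ν - 1) s t) atTop (𝓝 0) := by
  have hdecay := (tendsto_add_one_mul_exp_neg_mul_sq (a := (1 - r) ^ 2 / 2)
    (by have := sub_pos.2 hr1; positivity)).const_mul (exp (1 / 2) / ν)
  rw [mul_zero] at hdecay
  refine squeeze_zero' ?_ ?_ hdecay <;> filter_upwards [eventually_gt_atTop 0] with s hs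
  · exact div_nonneg (setIntegral_nonneg measurableSet_Ioc fun t ht => weight_nonneg ht.1.le)
      (integral_weight_pos hν hs).le
  have hlow := mul_exp_le_integral_weight hν hs
  rw [div_le_iff₀ (integral_weight_pos hν hs)]
  calc _ ≤ s ^ ν / ν * exp (-((1 - r) ^ 2 / 2) * s ^ 2) :=
        setIntegral_Ioc_weight_le hν hr0 hr1.le hs.le
    _ = exp (1 / 2) / ν * ((s + 1) * exp (-((1 - r) ^ 2 / 2) * s ^ 2)) *
          (s ^ ν / (s + 1) * exp (-1 / 2)) := by
        field_simp
        rw [← exp_add]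
        norm_num
    _ ≤ _ := mul_le_mul_of_nonneg_left hlow (by positivity)

theorem tendsto_setIntegral_Ioi_weight_div (hν : 0 < ν) (hr : 1 < r) :
    Tendsto (fun s => (∫ t in Ioi (r * s), weight ν s t) /
      (s * ∫ t in Ioi 0, weight (ν - 1) s t)) atTop (𝓝 0) := by
  set C := ∫ t in Ioi 0, t ^ ν * exp (-((r - 1) ^ 2 / (4 * r ^ 2)) * t ^ 2)
  have hC : 0 ≤ C := setIntegral_nonneg measurableSet_Ioi fun t (ht : 0 < t) => by positivity
  have hdecay := (tendsto_add_one_mul_exp_neg_mul_sq (a := (r - 1) ^ 2 / 4)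
    (by have := sub_pos.2 hr; positivity)).const_mul (C * exp (1 / 2))
  rw [mul_zero] at hdecay
  refine squeeze_zero' ?_ ?_ hdecay <;> filter_upwards [eventually_ge_atTop 1] with s hs
  · have hs0 : 0 < s := one_pos.trans_le hs
    exact div_nonneg (setIntegral_nonneg measurableSet_Ioi fun t (ht : r * s < t) =>
      weight_nonneg (by nlinarith)) (mul_pos hs0 (integral_weight_pos hν hs0)).le
  have hs0 : 0 < s := one_pos.trans_le hs
  have hlow : exp (-1 / 2) / (s + 1) ≤ s * ∫ t in Ioi 0, weight (ν - 1) s t := by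
    have hone : 1 ≤ s * s ^ ν := one_le_mul_of_one_le_of_one_le hs (one_le_rpow hs hν.le)
    calc exp (-1 / 2) / (s + 1) ≤ s * s ^ ν * (exp (-1 / 2) / (s + 1)) :=
          le_mul_of_one_le_left (by positivity) hone
      _ = s * (s ^ ν / (s + 1) * exp (-1 / 2)) := by ring
      _ ≤ _ := mul_le_mul_of_nonneg_left (mul_exp_le_integral_weight hν hs0) hs0.le
  rw [div_le_iff₀ (mul_pos hs0 (integral_weight_pos hν hs0))]
  calc _ ≤ C * exp (-((r - 1) ^ 2 / 4) * s ^ 2) :=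
        setIntegral_Ioi_weight_le (by linarith) hr hs0.le
    _ = C * exp (1 / 2) * ((s + 1) * exp (-((r - 1) ^ 2 / 4) * s ^ 2)) *
          (exp (-1 / 2) / (s + 1)) := by
        field_simp
        rw [mul_assoc, ← exp_add]
        norm_num
    _ ≤ _ := mul_le_mul_of_nonneg_left hlow (by positivity)

theorem eventually_lt_integral_weight_div (hν : 0 < ν) {a : ℝ} (ha : a < 1) :
    ∀ᶠ s in atTop,
      a < (∫ t in Ioi 0, weight ν s t) / (s * ∫ t in Ioi 0, weight (ν - 1) s t) := by
  obtain ⟨r, har, hr1⟩ := exists_between (max_lt ha one_pos)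
  have hr0 : 0 ≤ r := (le_max_right a 0).trans har.le
  have hlim := ((tendsto_setIntegral_Ioc_weight_div hν hr0 hr1).const_sub 1).const_mul r
  rw [sub_zero, mul_one] at hlim
  filter_upwards [hlim.eventually_const_lt ((le_max_left a 0).trans_lt har),
    eventually_gt_atTop 0] with s has hs
  have hB := integral_weight_pos hν hs
  refine has.trans_le ?_
  rw [le_div_iff₀ (mul_pos hs hB)]
  calc _ = r * s * ((∫ t in Ioi 0, weight (ν - 1) s t) -
          ∫ t in Ioc 0 (r * s), weight (ν - 1) s t) := by field_simp
    _ ≤ _ := mul_sub_setIntegral_Ioc_le_of_eq_mul (fun t ht => weight_eq_mul_weight_sub_one ht)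
        (fun t ht => weight_nonneg (le_of_lt ht)) (integrableOn_weight (by linarith) s)
        (integrableOn_weight (by linarith) s) (mul_nonneg hr0 hs.le)

theorem eventually_integral_weight_div_lt (hν : 0 < ν) {b : ℝ} (hb : 1 < b) :
    ∀ᶠ s in atTop,
      (∫ t in Ioi 0, weight ν s t) / (s * ∫ t in Ioi 0, weight (ν - 1) s t) < b := by
  obtain ⟨r, hr1, hrb⟩ := exists_between hb
  have hlim := (tendsto_setIntegral_Ioi_weight_div hν hr1).const_add r
  rw [add_zero] at hlim
  filter_upwards [hlim.eventually_lt_const hrb, eventually_gt_atTop 0] with s hsb hs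
  have hsB := mul_pos hs (integral_weight_pos hν hs)
  refine lt_of_le_of_lt ?_ hsb
  rw [div_le_iff₀ hsB, add_mul, div_mul_cancel₀ _ hsB.ne', ← mul_assoc]
  exact setIntegral_le_mul_add_setIntegral_Ioi_of_eq_mul
    (fun t ht => weight_eq_mul_weight_sub_one ht) (fun t ht => weight_nonneg (le_of_lt ht))
    (integrableOn_weight (by linarith) s) (integrableOn_weight (by linarith) s)
    (by positivity)

theorem tendsto_integral_weight_div (hν : 0 < ν) :
    Tendsto (fun s => (∫ t in Ioi 0, weight ν s t) / (s * ∫ t in Ioi 0, weight (ν - 1) s t))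
      atTop (𝓝 1) :=
  tendsto_order.2 ⟨fun _ ha => eventually_lt_integral_weight_div hν ha,
    fun _ hb => eventually_integral_weight_div_lt hν hb⟩

theorem integral_rpow_mul_exp_eq_mul_integral_weight (p z : ℝ) :
    ∫ t in Ioi 0, t ^ p * exp (-t ^ 2 / 2 - z * t) =
      exp (z ^ 2 / 2) * ∫ t in Ioi 0, weight p (-z) t := by
  rw [← integral_const_mul]
  congr 1 with t
  rw [weight, mul_left_comm, ← exp_add]
  ring_nf

end ParabolicCylinder

/-- The asymptotics `I_{ν+1}(z) / ((−z)·I_ν(z)) → 1` as `z → −∞`, where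
`I_ν(z) = ∫₀^∞ t^{ν−1} e^{−t²/2 − zt} dt`. -/
theorem parabolic_cylinder_integral_ratio_atBot (ν : ℝ) (hν : 0 < ν) :
    Tendsto (fun z : ℝ =>
        (∫ t in Set.Ioi (0 : ℝ), t ^ ν * Real.exp (-t ^ 2 / 2 - z * t)) /
          ((-z) * ∫ t in Set.Ioi (0 : ℝ), t ^ (ν - 1) * Real.exp (-t ^ 2 / 2 - z * t)))
      atBot (nhds 1) := by
  refine ((ParabolicCylinder.tendsto_integral_weight_div hν).comp
    tendsto_neg_atBot_atTop).congr fun z => ?_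
  simp only [Function.comp_apply, ParabolicCylinder.integral_rpow_mul_exp_eq_mul_integral_weight]
  rw [mul_left_comm, mul_div_mul_left _ _ (exp_pos _).ne']
end

section
/- Fix a positive integer γ and a real α > 0. For β ∈ ℝ and k = 0, 1, 2 define M_k(β) = ∫₀^∞ x^{γ+k} e^{−α²x² + βx} dx, and set μ(β) = M₁(β)/M₀(β) and σ²(β) = M₂(β)/M₀(β) − μ(β)². Then lim_{β → −∞} μ(β)²/σ²(β) = γ + 1. -/
open MeasureTheory Filter

/-- The `k`-shifted moment integral `M_k(β) = ∫₀^∞ x^{γ+k} e^{−α²x² + βx} dx` of the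
three-parameter Gamma kernel. -/
noncomputable def g3pMoment (γ : ℕ) (α : ℝ) (k : ℕ) (β : ℝ) : ℝ :=
  ∫ x in Set.Ioi (0 : ℝ), x ^ (γ + k) * Real.exp (-α ^ 2 * x ^ 2 + β * x)

/-- The mean `μ(β) = M₁(β)/M₀(β)` of the three-parameter Gamma distribution G3p(γ,α,β). -/
noncomputable def g3pMean (γ : ℕ) (α : ℝ) (β : ℝ) : ℝ :=
  g3pMoment γ α 1 β / g3pMoment γ α 0 β

/-- The variance `σ²(β) = M₂(β)/M₀(β) − μ(β)²` of the three-parameter Gamma distribution. -/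
noncomputable def g3pVar (γ : ℕ) (α : ℝ) (β : ℝ) : ℝ :=
  g3pMoment γ α 2 β / g3pMoment γ α 0 β - (g3pMean γ α β) ^ 2

/-! For `β < 0` substitute `x = t / (-β)`: then `(-β)^{γ+k+1} M_k(β)` is the Gamma-type
integral `∫₀^∞ t^{γ+k} e^{-(α/β)² t² - t} dt`, which tends to `(γ+k)!` by dominated
convergence (dominated by `t^{γ+k} e^{-t}`). The scale `(-β)^{γ+1}` cancels in `μ²/σ²`, and
the limit is `(γ+1)!² / ((γ+2)! γ! - (γ+1)!²) = γ + 1`. -/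

namespace G3p

lemma exp_neg_mul_rpow_natCast_add_one_sub_one {t : ℝ} (n : ℕ) :
    Real.exp (-t) * t ^ ((n : ℝ) + 1 - 1) = t ^ n * Real.exp (-t) := by
  rw [add_sub_cancel_right, Real.rpow_natCast, mul_comm]

lemma integrableOn_pow_mul_exp_neg (n : ℕ) :
    IntegrableOn (fun t : ℝ => t ^ n * Real.exp (-t)) (Set.Ioi 0) :=
  (Real.GammaIntegral_convergent (s := (n : ℝ) + 1) (by positivity)).congr_fun
    (fun _ _ => exp_neg_mul_rpow_natCast_add_one_sub_one n) measurableSet_Ioi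

lemma integral_pow_mul_exp_neg (n : ℕ) :
    ∫ t in Set.Ioi (0 : ℝ), t ^ n * Real.exp (-t) = n.factorial := by
  rw [← Real.Gamma_nat_eq_factorial, Real.Gamma_eq_integral (by positivity)]
  exact setIntegral_congr_fun measurableSet_Ioi
    fun _ _ => (exp_neg_mul_rpow_natCast_add_one_sub_one n).symm

lemma neg_pow_succ_mul_integral_pow_mul_exp_eq (n : ℕ) (a : ℝ) {β : ℝ} (hβ : β < 0) :
    (-β) ^ (n + 1) * ∫ x in Set.Ioi (0 : ℝ), x ^ n * Real.exp (-a * x ^ 2 + β * x)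
      = ∫ t in Set.Ioi (0 : ℝ), t ^ n * Real.exp (-(a / β ^ 2) * t ^ 2 - t) := by
  have hc : 0 < -β := neg_pos.mpr hβ
  have hsubst := integral_comp_mul_left_Ioi
    (fun t => t ^ n * Real.exp (-(a / β ^ 2) * t ^ 2 - t)) 0 hc
  have hscale : ∀ x : ℝ, (-β * x) ^ n * Real.exp (-(a / β ^ 2) * (-β * x) ^ 2 - -β * x)
      = (-β) ^ n * (x ^ n * Real.exp (-a * x ^ 2 + β * x)) := fun x => by
    have hexp : -(a / β ^ 2) * (-β * x) ^ 2 - -β * x = -a * x ^ 2 + β * x := by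
      field_simp [hβ.ne]
      ring
    rw [hexp, mul_pow, mul_assoc]
  simp only [mul_zero, hscale, integral_const_mul, smul_eq_mul] at hsubst
  rw [pow_succ', mul_assoc, hsubst, mul_inv_cancel_left₀ hc.ne']

lemma tendsto_integral_pow_mul_exp_neg_mul_sq_sub (n : ℕ) :
    Tendsto (fun ε : ℝ => ∫ t in Set.Ioi (0 : ℝ), t ^ n * Real.exp (-ε * t ^ 2 - t))
      (nhdsWithin 0 (Set.Ici 0)) (nhds n.factorial) := by
  rw [← integral_pow_mul_exp_neg n]
  refine tendsto_integral_filter_of_dominated_convergence _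
    (Eventually.of_forall fun _ => (Continuous.aestronglyMeasurable (by fun_prop)).restrict)
    ?_ (integrableOn_pow_mul_exp_neg n) ?_
  · filter_upwards [self_mem_nhdsWithin] with ε (hε : 0 ≤ ε)
    filter_upwards [ae_restrict_mem measurableSet_Ioi] with t (ht : 0 < t)
    rw [Real.norm_of_nonneg (by positivity)]
    gcongr
    nlinarith [mul_nonneg hε (sq_nonneg t)]
  · refine Eventually.of_forall fun t => ?_
    have hcont : Continuous fun ε : ℝ => t ^ n * Real.exp (-ε * t ^ 2 - t) := by fun_prop
    simpa using (hcont.tendsto 0).mono_left nhdsWithin_le_nhds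

lemma tendsto_div_sq_atBot {a : ℝ} (ha : 0 ≤ a) :
    Tendsto (fun β : ℝ => a / β ^ 2) atBot (nhdsWithin 0 (Set.Ici 0)) := by
  refine tendsto_nhdsWithin_iff.mpr
    ⟨?_, Eventually.of_forall fun β => Set.mem_Ici.mpr (by positivity)⟩
  have hsq : Tendsto (fun β : ℝ => β ^ 2) atBot atTop :=
    (tendsto_id.atBot_mul_atBot₀ tendsto_id).congr fun β => (sq β).symm
  simpa using (tendsto_const_nhds (x := a)).div_atTop hsq

/-- `μ²/σ²` expressed through the unnormalised moments `m₀, m₁, m₂`. -/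
noncomputable def momentShape (m₀ m₁ m₂ : ℝ) : ℝ :=
  m₁ ^ 2 / (m₂ * m₀ - m₁ ^ 2)

lemma momentShape_smul_pow {c : ℝ} (hc : c ≠ 0) (p : ℕ) (m₀ m₁ m₂ : ℝ) :
    momentShape (c ^ p * m₀) (c ^ (p + 1) * m₁) (c ^ (p + 2) * m₂) = momentShape m₀ m₁ m₂ := by
  have hden : c ^ (p + 2) * m₂ * (c ^ p * m₀) - (c ^ (p + 1) * m₁) ^ 2
      = (c ^ (p + 1)) ^ 2 * (m₂ * m₀ - m₁ ^ 2) := by ring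
  rw [momentShape, momentShape, hden, mul_pow,
    mul_div_mul_left _ _ (pow_ne_zero 2 (pow_ne_zero _ hc))]

lemma tendsto_momentShape {ι : Type*} {l : Filter ι} {f₀ f₁ f₂ : ι → ℝ} {m₀ m₁ m₂ : ℝ}
    (h₀ : Tendsto f₀ l (nhds m₀)) (h₁ : Tendsto f₁ l (nhds m₁)) (h₂ : Tendsto f₂ l (nhds m₂))
    (hm : m₂ * m₀ - m₁ ^ 2 ≠ 0) :
    Tendsto (fun i => momentShape (f₀ i) (f₁ i) (f₂ i)) l (nhds (momentShape m₀ m₁ m₂)) :=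
  (h₁.pow 2).div ((h₂.mul h₀).sub (h₁.pow 2)) hm

lemma factorial_add_two_mul_factorial_sub_sq (n : ℕ) :
    ((n + 2).factorial : ℝ) * n.factorial - ((n + 1).factorial : ℝ) ^ 2
      = (n + 1) * (n.factorial : ℝ) ^ 2 := by
  push_cast [Nat.factorial_succ]
  ring

lemma momentShape_factorial (n : ℕ) :
    momentShape n.factorial (n + 1).factorial (n + 2).factorial = n + 1 := by
  rw [momentShape, factorial_add_two_mul_factorial_sub_sq, div_eq_iff (by positivity)]
  push_cast [Nat.factorial_succ]
  ring

lemma g3pMean_sq_div_g3pVar (γ : ℕ) (α β : ℝ) (h₀ : g3pMoment γ α 0 β ≠ 0) :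
    g3pMean γ α β ^ 2 / g3pVar γ α β
      = momentShape (g3pMoment γ α 0 β) (g3pMoment γ α 1 β) (g3pMoment γ α 2 β) := by
  unfold g3pVar g3pMean momentShape
  have hvar : g3pMoment γ α 2 β / g3pMoment γ α 0 β - (g3pMoment γ α 1 β / g3pMoment γ α 0 β) ^ 2
      = (g3pMoment γ α 2 β * g3pMoment γ α 0 β - g3pMoment γ α 1 β ^ 2)
        / g3pMoment γ α 0 β ^ 2 := by
    field_simp
  rw [hvar, div_pow, div_div_div_cancel_right₀ (pow_ne_zero 2 h₀)]

lemma tendsto_neg_pow_mul_g3pMoment_atBot (γ : ℕ) (α : ℝ) (k : ℕ) :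
    Tendsto (fun β : ℝ => (-β) ^ (γ + k + 1) * g3pMoment γ α k β) atBot
      (nhds (γ + k).factorial) := by
  refine ((tendsto_integral_pow_mul_exp_neg_mul_sq_sub (γ + k)).comp
    (tendsto_div_sq_atBot (sq_nonneg α))).congr' ?_
  filter_upwards [eventually_lt_atBot 0] with β hβ
  exact (neg_pow_succ_mul_integral_pow_mul_exp_eq (γ + k) (α ^ 2) hβ).symm

end G3p

open G3p

theorem g3p_shape_tendsto_general (γ : ℕ) (α : ℝ) :
    Tendsto (fun β : ℝ => (g3pMean γ α β) ^ 2 / g3pVar γ α β) atBot (nhds ((γ : ℝ) + 1)) := by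
  have hN := tendsto_neg_pow_mul_g3pMoment_atBot γ α
  have hN₀ : Tendsto (fun β : ℝ => (-β) ^ (γ + 1) * g3pMoment γ α 0 β) atBot
      (nhds γ.factorial) := hN 0
  have hlim := tendsto_momentShape hN₀ (hN 1) (hN 2)
    (by rw [factorial_add_two_mul_factorial_sub_sq]; positivity)
  rw [momentShape_factorial] at hlim
  refine hlim.congr' ?_
  filter_upwards [eventually_lt_atBot 0, hN₀.eventually_ne (by positivity)]
    with β hβ hN₀
  have hM₀ : g3pMoment γ α 0 β ≠ 0 := right_ne_zero_of_mul hN₀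
  rw [g3pMean_sq_div_g3pVar γ α β hM₀]
  exact momentShape_smul_pow (neg_ne_zero.mpr hβ.ne) (γ + 1) _ _ _

/-- The shape parameter `μ²/σ²` of the moment-matched Gamma distribution tends to `γ+1`
as `β → −∞`. -/
theorem g3p_shape_tendsto (γ : ℕ) (hγ : 0 < γ) (α : ℝ) (hα : 0 < α) :
    Tendsto (fun β : ℝ => (g3pMean γ α β) ^ 2 / g3pVar γ α β) atBot (nhds ((γ : ℝ) + 1)) :=
  g3p_shape_tendsto_general γ α
end

section
/- Fix a positive integer γ and a real α > 0. For β ∈ ℝ define M₀(β) = ∫₀^∞ x^{γ} e^{−α²x² + βx} dx and M₁(β) = ∫₀^∞ x^{γ+1} e^{−α²x² + βx} dx, and set μ(β) = M₁(β)/M₀(β). Then lim_{β → +∞} 2α² μ(β)/β = 1. -/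
/-!
Integrating `d/dx (x^m e^{−α²x²+βx})` over `(0, ∞)` gives the moment recursion
`2α² M_{m+1} = β M_m + m M_{m−1} + 0^m`, where `M_m = ∫₀^∞ x^m e^{−α²x²+βx} dx`. With
`m = γ` it gives `2α² μ / β = 1 + γ M_{γ−1} / (β M_γ)`; since every term of the recursion is
nonnegative, `β M_{γ−1} ≤ 2α² M_γ`, so the error term is at most `2α²γ / β²`.
-/

open MeasureTheory Filter

open Real Set

noncomputable def gaussMoment (α β : ℝ) (n : ℕ) : ℝ :=
  ∫ x in Ioi (0 : ℝ), x ^ n * exp (-α ^ 2 * x ^ 2 + β * x)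

section GaussMoment

variable {α : ℝ} (β : ℝ)

lemma eventually_pow_mul_exp_quadratic_le_exp_neg (hα : α ≠ 0) (m : ℕ) :
    ∀ᶠ x in atTop, x ^ m * exp (-α ^ 2 * x ^ 2 + β * x) ≤ exp (-x) := by
  have hα2 : 0 < α ^ 2 := by positivity
  filter_upwards [eventually_ge_atTop ((m + β + 1) / α ^ 2), eventually_ge_atTop 0]
    with x hx hx0
  have hlin : (m + β + 1) * x ≤ α ^ 2 * x ^ 2 := by
    rw [div_le_iff₀ hα2] at hx
    nlinarith
  have hpow : x ^ m ≤ exp (m * x) :=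
    calc x ^ m ≤ exp x ^ m := pow_le_pow_left₀ hx0 (by linarith [add_one_le_exp x]) m
      _ = exp (m * x) := (exp_nat_mul x m).symm
  calc x ^ m * exp (-α ^ 2 * x ^ 2 + β * x)
      ≤ exp (m * x) * exp (-α ^ 2 * x ^ 2 + β * x) := by gcongr
    _ = exp (m * x + (-α ^ 2 * x ^ 2 + β * x)) := (exp_add _ _).symm
    _ ≤ exp (-x) := exp_le_exp.2 (by nlinarith)

lemma integrableOn_pow_mul_exp_quadratic (hα : α ≠ 0) (m : ℕ) :
    IntegrableOn (fun x => x ^ m * exp (-α ^ 2 * x ^ 2 + β * x)) (Ioi 0) := by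
  refine integrable_of_isBigO_exp_neg one_pos (by fun_prop) (Asymptotics.IsBigO.of_bound 1 ?_)
  filter_upwards [eventually_pow_mul_exp_quadratic_le_exp_neg β hα m, eventually_ge_atTop 0]
    with x hx hx0
  rw [norm_of_nonneg (by positivity), norm_of_nonneg (exp_pos _).le, neg_one_mul, one_mul]
  exact hx

lemma tendsto_pow_mul_exp_quadratic_atTop (hα : α ≠ 0) (m : ℕ) :
    Tendsto (fun x => x ^ m * exp (-α ^ 2 * x ^ 2 + β * x)) atTop (nhds 0) := by
  refine squeeze_zero' ?_ (eventually_pow_mul_exp_quadratic_le_exp_neg β hα m)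
    (tendsto_exp_atBot.comp tendsto_neg_atTop_atBot)
  filter_upwards [eventually_ge_atTop 0] with x hx0
  positivity

lemma gaussMoment_nonneg (n : ℕ) : 0 ≤ gaussMoment α β n :=
  setIntegral_nonneg measurableSet_Ioi fun x (hx : 0 < x) => by positivity

lemma gaussMoment_pos (hα : α ≠ 0) (n : ℕ) : 0 < gaussMoment α β n := by
  have hpos : ∀ x ∈ Ioi (0 : ℝ), 0 < x ^ n * exp (-α ^ 2 * x ^ 2 + β * x) :=
    fun x (hx : 0 < x) => by positivity
  rw [gaussMoment, setIntegral_pos_iff_support_of_nonneg_ae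
    ((ae_restrict_iff' measurableSet_Ioi).2 (.of_forall fun x hx => (hpos x hx).le))
    (integrableOn_pow_mul_exp_quadratic β hα n)]
  refine lt_of_lt_of_le ?_ (measure_mono fun x hx => ⟨(hpos x hx).ne', hx⟩)
  simp

-- `0 ^ m` is the boundary term at `x = 0`; at `m = 0` the truncated `m - 1` is multiplied by `0`.
lemma gaussMoment_recursion (hα : α ≠ 0) (m : ℕ) :
    2 * α ^ 2 * gaussMoment α β (m + 1) =
      β * gaussMoment α β m + m * gaussMoment α β (m - 1) + 0 ^ m := by
  set E : ℝ → ℝ := fun x => exp (-α ^ 2 * x ^ 2 + β * x)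
  have hint (k : ℕ) : IntegrableOn (fun x => x ^ k * E x) (Ioi 0) :=
    integrableOn_pow_mul_exp_quadratic β hα k
  have hderiv (x : ℝ) : HasDerivAt (fun x => x ^ m * E x)
      (m * (x ^ (m - 1) * E x) + β * (x ^ m * E x) - 2 * α ^ 2 * (x ^ (m + 1) * E x)) x := by
    have hq : HasDerivAt (fun x => -α ^ 2 * x ^ 2 + β * x) (-α ^ 2 * (2 * x) + β) x :=
      (((hasDerivAt_pow 2 x).const_mul (-α ^ 2)).add
        ((hasDerivAt_id x).const_mul β)).congr_deriv (by norm_num)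
    exact ((hasDerivAt_pow m x).mul hq.exp).congr_deriv (by simp only [E]; ring)
  have h₁ : Integrable (fun x => m * (x ^ (m - 1) * E x)) (volume.restrict (Ioi 0)) :=
    (hint _).const_mul _
  have h₂ : Integrable (fun x => β * (x ^ m * E x)) (volume.restrict (Ioi 0)) :=
    (hint _).const_mul _
  have h₃ : Integrable (fun x => 2 * α ^ 2 * (x ^ (m + 1) * E x)) (volume.restrict (Ioi 0)) :=
    (hint _).const_mul _
  have h₁₂ : Integrable (fun x => m * (x ^ (m - 1) * E x) + β * (x ^ m * E x))
      (volume.restrict (Ioi 0)) := h₁.add h₂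
  have hibp := integral_Ioi_of_hasDerivAt_of_tendsto' (fun x _ => hderiv x)
    (h₁₂.sub h₃) (tendsto_pow_mul_exp_quadratic_atTop β hα m)
  have hE0 : E 0 = 1 := by simp [E]
  rw [hE0, mul_one, zero_sub, integral_sub h₁₂ h₃, integral_add h₁ h₂, integral_const_mul,
    integral_const_mul, integral_const_mul] at hibp
  simp only [gaussMoment]
  linarith

lemma mul_gaussMoment_le (hα : α ≠ 0) (m : ℕ) :
    β * gaussMoment α β m ≤ 2 * α ^ 2 * gaussMoment α β (m + 1) := by
  rw [gaussMoment_recursion β hα m]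
  have := mul_nonneg m.cast_nonneg (gaussMoment_nonneg (α := α) β (m - 1))
  have : (0 : ℝ) ≤ 0 ^ m := pow_nonneg le_rfl m
  linarith

end GaussMoment

lemma tendsto_gaussMoment_div_mul_gaussMoment_succ {α : ℝ} (hα : α ≠ 0) (n : ℕ) :
    Tendsto (fun β => gaussMoment α β n / (β * gaussMoment α β (n + 1))) atTop (nhds 0) := by
  refine squeeze_zero' (g := fun β => 2 * α ^ 2 / β ^ 2) ?_ ?_
    (tendsto_const_nhds.div_atTop (tendsto_pow_atTop two_ne_zero))
  · filter_upwards [eventually_gt_atTop 0] with β hβ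
    exact div_nonneg (gaussMoment_nonneg β n) (by positivity [gaussMoment_pos β hα (n + 1)])
  · filter_upwards [eventually_gt_atTop 0] with β hβ
    have hpos := gaussMoment_pos β hα (n + 1)
    rw [div_le_div_iff₀ (by positivity) (by positivity)]
    nlinarith [mul_gaussMoment_le β hα n]

lemma g3pMean_eq_div (γ : ℕ) (α β : ℝ) :
    g3pMean γ α β = gaussMoment α β (γ + 1) / gaussMoment α β γ :=
  rfl

lemma two_mul_sq_mul_g3pMean_div {α β : ℝ} (hα : α ≠ 0) (hβ : β ≠ 0) (n : ℕ) :
    2 * α ^ 2 * g3pMean (n + 1) α β / β =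
      1 + (n + 1) * (gaussMoment α β n / (β * gaussMoment α β (n + 1))) := by
  have hpos := gaussMoment_pos β hα (n + 1)
  have hrec := gaussMoment_recursion β hα (n + 1)
  push_cast at hrec
  rw [g3pMean_eq_div]
  field_simp
  linear_combination hrec

/-- Equation (e11): as `β → +∞` the mean of the three-parameter Gamma distribution
satisfies `μ(β) ~ β/(2α²)`, i.e. `2α²μ(β)/β → 1`. -/
theorem g3p_mean_asymptotic_atTop (γ : ℕ) (hγ : 0 < γ) (α : ℝ) (hα : 0 < α) :
    Tendsto (fun β : ℝ => 2 * α ^ 2 * g3pMean γ α β / β) atTop (nhds 1) := by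
  obtain ⟨n, rfl⟩ : ∃ n, γ = n + 1 := Nat.exists_eq_add_one.2 hγ
  have hlim := ((tendsto_gaussMoment_div_mul_gaussMoment_succ hα.ne' n).const_mul
    ((n : ℝ) + 1)).const_add 1
  rw [mul_zero, add_zero] at hlim
  refine hlim.congr' ?_
  filter_upwards [eventually_ne_atTop 0] with β hβ
  exact (two_mul_sq_mul_g3pMean_div hα.ne' hβ n).symm
end

section
/- Fix a positive integer γ and a real α > 0. For β ∈ ℝ and k = 0, 1, 2 define M_k(β) = ∫₀^∞ x^{γ+k} e^{−α²x² + βx} dx, and set μ(β) = M₁(β)/M₀(β) and σ²(β) = M₂(β)/M₀(β) − μ(β)². Then lim_{β → +∞} σ²(β) = 1/(2α²). -/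
open MeasureTheory Filter

/-!
Write `a = α²` and `M_k = ∫₀^∞ x^k e^{-ax²+βx} dx`. Integrating `(x^{k+1} e^{-ax²+βx})'` over
`(0, ∞)` gives the recurrence `2a M_{k+2} = β M_{k+1} + (k+1) M_k`, which turns the variance for
`γ = n + 1` into `1/(2a) - (n+1)(M_n M_{n+2} - M_{n+1}²) / (2a M_{n+1}²)`. The bracket is
nonnegative by Cauchy–Schwarz, and the recurrence together with `β M_n ≤ 2a M_{n+1}` bounds it by
`2a(n+1) M_{n+1}² / β²`. So the variance is squeezed between `1/(2a) - (n+1)²/β²` and `1/(2a)`.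
-/

open Real Set Topology

namespace G3p

/-- `g3pMoment γ α k = moment (α ^ 2) (γ + k)` definitionally. -/
noncomputable def moment (a : ℝ) (n : ℕ) (β : ℝ) : ℝ :=
  ∫ x in Ioi 0, x ^ n * exp (-a * x ^ 2 + β * x)

variable {a : ℝ}

theorem tendsto_pow_mul_exp_atTop (ha : 0 < a) (β : ℝ) (n : ℕ) :
    Tendsto (fun x => x ^ n * exp (-a * x ^ 2 + β * x)) atTop (𝓝 0) := by
  refine squeeze_zero' ?_ ?_ (tendsto_pow_mul_exp_neg_atTop_nhds_zero n)
  · filter_upwards [eventually_ge_atTop 0] with x hx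
    positivity
  · filter_upwards [eventually_ge_atTop ((β + 1) / a), eventually_ge_atTop 0] with x hβx hx
    have : β + 1 ≤ a * x := by rwa [div_le_iff₀' ha] at hβx
    gcongr
    nlinarith

theorem integrableOn_pow_mul_exp (ha : 0 < a) (β : ℝ) (n : ℕ) :
    IntegrableOn (fun x => x ^ n * exp (-a * x ^ 2 + β * x)) (Ioi 0) := by
  refine integrable_of_isBigO_exp_neg one_pos (by fun_prop) ?_
  -- the extra factor `e^x` keeps the integrand bounded, so it is `O(e^{-x})`
  have hbdd := (tendsto_pow_mul_exp_atTop ha (β + 1) n).isBigO_one ℝ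
  refine (hbdd.mul (Asymptotics.isBigO_refl (fun x => exp (-1 * x)) atTop)).congr
    (fun x => ?_) fun x => ?_
  · rw [mul_assoc, ← exp_add]
    ring_nf
  · exact one_mul _

theorem moment_pos (ha : 0 < a) (n : ℕ) (β : ℝ) : 0 < moment a n β := by
  have hnonneg : 0 ≤ᵐ[volume.restrict (Ioi 0)] fun x : ℝ => x ^ n * exp (-a * x ^ 2 + β * x) := by
    filter_upwards [ae_restrict_mem measurableSet_Ioi] with x (hx : 0 < x)
    positivity
  rw [moment, setIntegral_pos_iff_support_of_nonneg_ae hnonneg (integrableOn_pow_mul_exp ha β n)]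
  refine (Measure.measure_Ioi_pos volume 0).trans_le (measure_mono fun x (hx : 0 < x) => ⟨?_, hx⟩)
  exact (by positivity : x ^ n * exp (-a * x ^ 2 + β * x) ≠ 0)

theorem integrableOn_comb_mul_exp (ha : 0 < a) (β c₀ c₁ c₂ : ℝ) (i j l : ℕ) :
    IntegrableOn (fun x => (c₀ * x ^ i + c₁ * x ^ j + c₂ * x ^ l) * exp (-a * x ^ 2 + β * x))
      (Ioi 0) := by
  have hint (k : ℕ) (c : ℝ) := (integrableOn_pow_mul_exp ha β k).const_mul c
  refine (((hint i c₀).add (hint j c₁)).add (hint l c₂)).congr (ae_of_all _ fun x => ?_)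
  simp only [Pi.add_apply]
  ring

theorem integral_comb_mul_exp (ha : 0 < a) (β c₀ c₁ c₂ : ℝ) (i j l : ℕ) :
    ∫ x in Ioi 0, (c₀ * x ^ i + c₁ * x ^ j + c₂ * x ^ l) * exp (-a * x ^ 2 + β * x) =
      c₀ * moment a i β + c₁ * moment a j β + c₂ * moment a l β := by
  have hint (k : ℕ) (c : ℝ) := (integrableOn_pow_mul_exp ha β k).const_mul c
  simp_rw [add_mul, mul_assoc]
  rw [integral_add ?_ (hint l c₂), integral_add (hint i c₀) (hint j c₁),
    integral_const_mul, integral_const_mul, integral_const_mul]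
  · rfl
  · exact (hint i c₀).add (hint j c₁)

theorem hasDerivAt_pow_mul_exp (β : ℝ) (k : ℕ) (x : ℝ) :
    HasDerivAt (fun x => x ^ k * exp (-a * x ^ 2 + β * x))
      ((k * x ^ (k - 1) + β * x ^ k + -2 * a * x ^ (k + 1)) * exp (-a * x ^ 2 + β * x)) x := by
  have hφ : HasDerivAt (fun x => -a * x ^ 2 + β * x) (-a * (2 * x ^ 1) + β * 1) x :=
    ((hasDerivAt_pow 2 x).const_mul (-a)).add ((hasDerivAt_id x).const_mul β)
  refine ((hasDerivAt_pow k x).mul hφ.exp).congr_deriv ?_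
  ring

/-- Integration by parts; the boundary term at `0` is `0 ^ k`. -/
theorem moment_succ (ha : 0 < a) (β : ℝ) (k : ℕ) :
    2 * a * moment a (k + 1) β = β * moment a k β + k * moment a (k - 1) β + 0 ^ k := by
  have hibp := integral_Ioi_of_hasDerivAt_of_tendsto' (fun x _ => hasDerivAt_pow_mul_exp β k x)
    (integrableOn_comb_mul_exp ha β _ _ _ _ _ _) (tendsto_pow_mul_exp_atTop ha β k)
  rw [integral_comb_mul_exp ha] at hibp
  simp only [ne_eq, OfNat.ofNat_ne_zero, not_false_eq_true, zero_pow, mul_zero, add_zero,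
    exp_zero, mul_one, zero_sub] at hibp
  linarith

theorem moment_recurrence (ha : 0 < a) (β : ℝ) (n : ℕ) :
    2 * a * moment a (n + 2) β = β * moment a (n + 1) β + (n + 1) * moment a n β := by
  simpa using moment_succ ha β (n + 1)

theorem mul_moment_le (ha : 0 < a) (β : ℝ) (n : ℕ) :
    β * moment a n β ≤ 2 * a * moment a (n + 1) β := by
  have := moment_pos ha (n - 1) β
  rw [moment_succ ha, add_assoc]
  exact le_add_of_nonneg_right (add_nonneg (by positivity) (pow_nonneg le_rfl n))

theorem sq_moment_le (ha : 0 < a) (β : ℝ) (n : ℕ) :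
    moment a (n + 1) β ^ 2 ≤ moment a n β * moment a (n + 2) β := by
  set A := moment a n β
  set B := moment a (n + 1) β
  have hvar : 0 ≤ ∫ x in Ioi 0,
      (B ^ 2 * x ^ n + -2 * A * B * x ^ (n + 1) + A ^ 2 * x ^ (n + 2)) * exp (-a * x ^ 2 + β * x) := by
    refine setIntegral_nonneg measurableSet_Ioi fun x (hx : 0 < x) => ?_
    have hsq : (B ^ 2 * x ^ n + -2 * A * B * x ^ (n + 1) + A ^ 2 * x ^ (n + 2)) =
        (B - A * x) ^ 2 * x ^ n := by ring
    rw [hsq]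
    positivity
  rw [integral_comb_mul_exp ha] at hvar
  nlinarith [moment_pos ha n β]

theorem sq_mul_moment_sub_le (ha : 0 < a) {β : ℝ} (hβ : 0 < β) (n : ℕ) :
    β ^ 2 * (moment a n β * moment a (n + 2) β - moment a (n + 1) β ^ 2) ≤
      2 * a * (n + 1) * moment a (n + 1) β ^ 2 := by
  set A := moment a n β
  set B := moment a (n + 1) β
  have hle : β * A ≤ 2 * a * B := mul_moment_le ha β n
  have hgap : 2 * a * (A * moment a (n + 2) β - B ^ 2) ≤ (n + 1) * A ^ 2 := by
    linear_combination A * moment_recurrence ha β n +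
      mul_le_mul_of_nonneg_right hle (moment_pos ha (n + 1) β).le
  have hsq : (β * A) ^ 2 ≤ (2 * a * B) ^ 2 :=
    pow_le_pow_left₀ (mul_pos hβ (moment_pos ha n β)).le hle 2
  refine le_of_mul_le_mul_left ?_ (by positivity : 0 < 2 * a)
  linear_combination β ^ 2 * hgap + (n + 1 : ℝ) * hsq

variable {α : ℝ}

theorem g3pVar_eq (hα : α ≠ 0) (n : ℕ) (β : ℝ) :
    g3pVar (n + 1) α β = 1 / (2 * α ^ 2) - (n + 1) *
      (moment (α ^ 2) n β * moment (α ^ 2) (n + 2) β - moment (α ^ 2) (n + 1) β ^ 2) /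
        (2 * α ^ 2 * moment (α ^ 2) (n + 1) β ^ 2) := by
  have ha : 0 < α ^ 2 := by positivity
  have := (moment_pos ha (n + 1) β).ne'
  have hrec₁ := moment_recurrence ha β n
  have hrec₂ := moment_recurrence ha β (n + 1)
  rw [show n + 1 + 2 = n + 3 from rfl, show n + 1 + 1 = n + 2 from rfl] at hrec₂
  change moment (α ^ 2) (n + 3) β / moment (α ^ 2) (n + 1) β -
    (moment (α ^ 2) (n + 2) β / moment (α ^ 2) (n + 1) β) ^ 2 = _
  field_simp
  push_cast at hrec₂
  linear_combination moment (α ^ 2) (n + 1) β * hrec₂ - moment (α ^ 2) (n + 2) β * hrec₁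

theorem g3pVar_le (hα : α ≠ 0) (n : ℕ) (β : ℝ) : g3pVar (n + 1) α β ≤ 1 / (2 * α ^ 2) := by
  have ha : 0 < α ^ 2 := by positivity
  rw [g3pVar_eq hα, sub_le_self_iff]
  have := sq_moment_le ha β n
  have := moment_pos ha (n + 1) β
  positivity

theorem sub_le_g3pVar (hα : α ≠ 0) (n : ℕ) {β : ℝ} (hβ : 0 < β) :
    1 / (2 * α ^ 2) - (n + 1) ^ 2 / β ^ 2 ≤ g3pVar (n + 1) α β := by
  have ha : 0 < α ^ 2 := by positivity
  have := moment_pos ha (n + 1) β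
  rw [g3pVar_eq hα, sub_le_sub_iff_left, div_le_div_iff₀ (by positivity) (by positivity)]
  linear_combination ((n : ℝ) + 1) * sq_mul_moment_sub_le ha hβ n

end G3p

open G3p in
/-- Equation (e12): as `β → +∞` the variance of the three-parameter Gamma distribution
converges to `1/(2α²)`. -/
theorem g3p_var_tendsto_atTop (γ : ℕ) (hγ : 0 < γ) (α : ℝ) (hα : 0 < α) :
    Tendsto (fun β : ℝ => g3pVar γ α β) atTop (nhds (1 / (2 * α ^ 2))) := by
  obtain ⟨n, rfl⟩ : ∃ n, γ = n + 1 := ⟨γ - 1, by omega⟩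
  have hlower : Tendsto (fun β : ℝ => 1 / (2 * α ^ 2) - (n + 1) ^ 2 / β ^ 2) atTop
      (𝓝 (1 / (2 * α ^ 2))) := by
    simpa using tendsto_const_nhds.sub
      (tendsto_const_nhds.div_atTop (tendsto_pow_atTop (α := ℝ) two_ne_zero))
  refine tendsto_of_tendsto_of_tendsto_of_le_of_le' hlower tendsto_const_nhds ?_
    (Eventually.of_forall (g3pVar_le hα.ne' n))
  filter_upwards [eventually_gt_atTop 0] with β hβ using sub_le_g3pVar hα.ne' n hβ
end
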